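/- arXiv:2206.03172 — 2 statements merged into one kernel-verified Lean document; each statement's English description precedes it below -/
import Mathlib

section
/- Let (g, t) and (g′, t′) be constructions with decompositions D and D′ respectively. If D = D′ then (g, t) = (g′, t′); that is, a decomposition is a decomposition of a unique construction. -/
namespace RST

/-! ## Type systems -/

/-- A relation (given as a set of pairs) is a partial order on the set `Ty`. -/
def IsPartialOrderOn {U : Type*} (Ty : Set U) (le : Set (U × U)) : Prop :=
  (∀ p ∈ le, p.1 ∈ Ty ∧ p.2 ∈ Ty) ∧
  (∀ τ ∈ Ty, (τ, τ) ∈ le) ∧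
  (∀ a b : U, (a, b) ∈ le → (b, a) ∈ le → a = b) ∧
  (∀ a b c : U, (a, b) ∈ le → (b, c) ∈ le → (a, c) ∈ le)

/-- The subtype closure of `Ty'` in the type system `(Ty, le)`. -/
def subtypeClosure {U : Type*} (Ty : Set U) (le : Set (U × U)) (Ty' : Set U) : Set U :=
  {τ | τ ∈ Ty ∧ ∃ τ' ∈ Ty', (τ, τ') ∈ le}

/-- The set of all subtype closures of subsets of `Ty`. -/
def SC {U : Type*} (Ty : Set U) (le : Set (U × U)) : Set (Set U) :=
  {S | ∃ Ty' ⊆ Ty, S = subtypeClosure Ty le Ty'}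

/-- The candidate order of an upper bound extension: the reflexive closure (on `Ty ∪ Tystar`)
of `le` together with the pairs `(τ, f S)` for `τ ∈ S ∈ SC Ty le`. -/
def upperBoundRel {U : Type*} (Ty Tystar : Set U) (le : Set (U × U)) (f : Set U → U) :
    Set (U × U) :=
  (le ∪ {p : U × U | ∃ S ∈ SC Ty le, p.1 ∈ S ∧ p.2 = f S}) ∪
    {p : U × U | p.1 = p.2 ∧ p.1 ∈ Ty ∪ Tystar}

/-! ## Graphs -/

/-- A (raw) directed labelled bipartite graph: tokens `Tk`, configurators `Cf`, arrows `Arr`,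
incidence, arrow indices and vertex labels all given relationally (as sets of pairs), so that
unions of graphs are componentwise unions. -/
structure PreGraph (V A L : Type*) where
  Tk : Set V
  Cf : Set V
  Arr : Set A
  inc : Set (A × (V × V))
  ia : Set (A × ℕ)
  tl : Set (V × L)
  cl : Set (V × L)

variable {V A L : Type*}

instance : Union (PreGraph V A L) :=
  ⟨fun g h =>
    ⟨g.Tk ∪ h.Tk, g.Cf ∪ h.Cf, g.Arr ∪ h.Arr, g.inc ∪ h.inc, g.ia ∪ h.ia,
      g.tl ∪ h.tl, g.cl ∪ h.cl⟩⟩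

def PreGraph.Subgraph (h g : PreGraph V A L) : Prop :=
  h.Tk ⊆ g.Tk ∧ h.Cf ⊆ g.Cf ∧ h.Arr ⊆ g.Arr ∧ h.inc ⊆ g.inc ∧ h.ia ⊆ g.ia ∧
    h.tl ⊆ g.tl ∧ h.cl ⊆ g.cl

/-- The vertices adjacent to `u` (together with `u`). -/
def PreGraph.adjTo (g : PreGraph V A L) (u : V) : Set V :=
  {u} ∪ {v | ∃ a ∈ g.Arr, (a, (v, u)) ∈ g.inc ∨ (a, (u, v)) ∈ g.inc}

/-- The arrows incident to `u`. -/
def PreGraph.incidentArrows (g : PreGraph V A L) (u : V) : Set A :=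
  {a | a ∈ g.Arr ∧ ∃ v, (a, (v, u)) ∈ g.inc ∨ (a, (u, v)) ∈ g.inc}

/-- The restriction of a graph to given vertex and arrow sets. -/
def PreGraph.restrict (g : PreGraph V A L) (Vs : Set V) (As : Set A) : PreGraph V A L :=
  ⟨g.Tk ∩ Vs, g.Cf ∩ Vs, g.Arr ∩ As, {q | q ∈ g.inc ∧ q.1 ∈ As},
    {q | q ∈ g.ia ∧ q.1 ∈ As}, {q | q ∈ g.tl ∧ q.1 ∈ Vs}, {q | q ∈ g.cl ∧ q.1 ∈ Vs}⟩

/-- The neighbourhood of a vertex `u`. -/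
def PreGraph.Nh (g : PreGraph V A L) (u : V) : PreGraph V A L :=
  g.restrict (g.adjTo u) (g.incidentArrows u)

/-- A set of pairs is (the graph of) a function with domain `D`. -/
def IsFunctionOn {α β : Type*} (R : Set (α × β)) (D : Set α) : Prop :=
  (∀ p ∈ R, p.1 ∈ D) ∧ ∀ x ∈ D, ∃! y, (x, y) ∈ R

/-- A raw graph is a genuine directed labelled bipartite graph. -/
def IsGraph (g : PreGraph V A L) : Prop :=
  Disjoint g.Tk g.Cf ∧
  IsFunctionOn g.inc g.Arr ∧
  (∀ a v w, (a, (v, w)) ∈ g.inc → (v ∈ g.Tk ∧ w ∈ g.Cf) ∨ (v ∈ g.Cf ∧ w ∈ g.Tk)) ∧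
  IsFunctionOn g.ia g.Arr ∧ IsFunctionOn g.tl g.Tk ∧ IsFunctionOn g.cl g.Cf

/-- `ars` is the list of incoming arrows of `u`, listed in increasing index order
(the arrow at position `i` carries index `i+1`). -/
def InArrowSeq (g : PreGraph V A L) (u : V) (ars : List A) : Prop :=
  ars.Nodup ∧ (∀ a : A, a ∈ ars ↔ a ∈ g.Arr ∧ ∃ w, (a, (w, u)) ∈ g.inc) ∧
  ∀ (i : ℕ) (a : A), ars[i]? = some a → (a, i + 1) ∈ g.ia

/-- `t` is an output token of the configurator `u`. -/
def OutputTok (g : PreGraph V A L) (u t : V) : Prop :=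
  ∃ a ∈ g.Arr, (a, (u, t)) ∈ g.inc

/-- `ts` is the input token-sequence of the configurator `u`. -/
def InputTokSeq (g : PreGraph V A L) (u : V) (ts : List V) : Prop :=
  ∃ ars : List A, InArrowSeq g u ars ∧
    List.Forall₂ (fun a v => (a, (v, u)) ∈ g.inc) ars ts

/-- `τs` is the input type-sequence of the configurator `u`. -/
def InputTypeSeq (g : PreGraph V A L) (u : V) (τs : List L) : Prop :=
  ∃ ts : List V, InputTokSeq g u ts ∧ List.Forall₂ (fun v τ => (v, τ) ∈ g.tl) ts τs

/-- `g` is a configuration of the constructor `c` (with signature `(ins, out)`),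
whose single configurator is `u`. -/
def IsConfiguration (le : Set (L × L)) (g : PreGraph V A L) (u : V) (c : L)
    (ins : List L) (out : L) : Prop :=
  IsGraph g ∧ g.Cf = {u} ∧ (u, c) ∈ g.cl ∧
  g.Tk = {v | ∃ a ∈ g.Arr, (a, (v, u)) ∈ g.inc ∨ (a, (u, v)) ∈ g.inc} ∧
  (∃! a0 : A, a0 ∈ g.Arr ∧ ∃ w, (a0, (u, w)) ∈ g.inc) ∧
  (∀ a0 ∈ g.Arr, ∀ w : V, (a0, (u, w)) ∈ g.inc →
      (a0, 0) ∈ g.ia ∧ ∃ σ, (w, σ) ∈ g.tl ∧ (σ, out) ∈ le) ∧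
  (∃ ars : List A, InArrowSeq g u ars ∧ ars.length = ins.length ∧
    ∀ (i : ℕ) (a : A) (τ : L), ars[i]? = some a → ins[i]? = some τ →
      ∃ w σ, (a, (w, u)) ∈ g.inc ∧ (w, σ) ∈ g.tl ∧ (σ, τ) ∈ le)

/-- A structure graph for the constructor specification `(C, sig)` over types `(Ty, le)`. -/
def IsStructureGraph (Ty : Set L) (le : Set (L × L)) (C : Set L)
    (sig : Set (L × (List L × L))) (g : PreGraph V A L) : Prop :=
  IsGraph g ∧ (∀ x τ, (x, τ) ∈ g.tl → τ ∈ Ty) ∧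
  ∀ u ∈ g.Cf, ∃ c ins out, (u, c) ∈ g.cl ∧ c ∈ C ∧ (c, (ins, out)) ∈ sig ∧
    IsConfiguration le (g.Nh u) u c ins out

/-! ## Construction spaces -/

/-- The raw data of a construction space: a type system, a constructor specification and
a structure graph. -/
structure CSpace (V A L : Type*) where
  Ty : Set L
  le : Set (L × L)
  C : Set L
  sig : Set (L × (List L × L))
  G : PreGraph V A L

instance : Union (CSpace V A L) :=
  ⟨fun c d => ⟨c.Ty ∪ d.Ty, c.le ∪ d.le, c.C ∪ d.C, c.sig ∪ d.sig, c.G ∪ d.G⟩⟩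

/-- The raw data forms a genuine construction space. -/
def IsCSpace (Cs : CSpace V A L) : Prop :=
  IsPartialOrderOn Cs.Ty Cs.le ∧ Disjoint Cs.C Cs.Ty ∧ IsFunctionOn Cs.sig Cs.C ∧
  (∀ c ins out, (c, (ins, out)) ∈ Cs.sig →
      ins ≠ [] ∧ (∀ τ ∈ ins, τ ∈ Cs.Ty) ∧ out ∈ Cs.Ty) ∧
  IsStructureGraph Cs.Ty Cs.le Cs.C Cs.sig Cs.G

/-- Token-functionality of the constructors of a structure graph. -/
def TokenFunctional (g : PreGraph V A L) : Prop :=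
  ∀ u u' c, u ∈ g.Cf → u' ∈ g.Cf → (u, c) ∈ g.cl → (u', c) ∈ g.cl →
    ∀ ts, InputTokSeq g u ts → InputTokSeq g u' ts →
      ∀ t t', OutputTok g u t → OutputTok g u' t' → t = t'

/-- Type-functionality of the constructors of a structure graph. -/
def TypeFunctional (g : PreGraph V A L) : Prop :=
  ∀ u u' c, u ∈ g.Cf → u' ∈ g.Cf → (u, c) ∈ g.cl → (u', c) ∈ g.cl →
    ∀ τs, InputTypeSeq g u τs → InputTypeSeq g u' τs →
      ∀ t t' τ τ', OutputTok g u t → OutputTok g u' t' →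
        (t, τ) ∈ g.tl → (t', τ') ∈ g.tl → τ = τ'

def IsFunctionalGraph (g : PreGraph V A L) : Prop :=
  TokenFunctional g ∧ TypeFunctional g

/-! ## Representational systems -/

/-- The raw data of a representational system: grammatical, entailment and identification
spaces. -/
structure RSystem (V A L : Type*) where
  Gs : CSpace V A L
  Es : CSpace V A L
  Is : CSpace V A L

instance : Union (RSystem V A L) :=
  ⟨fun r s => ⟨r.Gs ∪ s.Gs, r.Es ∪ s.Es, r.Is ∪ s.Is⟩⟩

/-- The universal space of a representational system. -/
def RSystem.uspace (R : RSystem V A L) : CSpace V A L := (R.Gs ∪ R.Es) ∪ R.Is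

/-- `R` is a representational system formed over the type system `(Ty, le)` and the
meta-type system `(MTy, Mle)`. -/
def IsRSystem (R : RSystem V A L) (Ty : Set L) (le : Set (L × L))
    (MTy : Set L) (Mle : Set (L × L)) : Prop :=
  IsPartialOrderOn Ty le ∧ IsPartialOrderOn MTy Mle ∧
  IsPartialOrderOn (Ty ∪ MTy) (le ∪ Mle) ∧
  R.Gs.Ty = Ty ∧ R.Gs.le = le ∧ IsCSpace R.Gs ∧ IsFunctionalGraph R.Gs.G ∧
  R.Es.Ty = Ty ∧ R.Es.le = le ∧ IsCSpace R.Es ∧ R.Es.G.Tk ⊆ R.Gs.G.Tk ∧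
  R.Is.Ty = Ty ∪ MTy ∧ R.Is.le = le ∪ Mle ∧ IsCSpace R.Is ∧
  (∀ x ∈ R.Is.G.Tk, x ∉ R.Gs.G.Tk → ∃ τ ∈ MTy, (x, τ) ∈ R.Is.G.tl) ∧
  (∀ x ∈ R.Is.G.Tk, (∃ u ∈ R.Is.G.Cf, OutputTok R.Is.G u x) → x ∉ R.Gs.G.Tk) ∧
  IsCSpace (R.Gs ∪ R.Es) ∧ IsCSpace (R.Gs ∪ R.Is) ∧ IsCSpace (R.Es ∪ R.Is) ∧
  Disjoint R.Gs.C R.Es.C ∧ Disjoint R.Gs.C R.Is.C ∧ Disjoint R.Es.C R.Is.C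

/-- `(R, R', Is'')` is an inter-representational-system encoding, where `R` is formed over
`(Ty, le)` and `(MTy, Mle)`, `R'` over `(Ty', le')` and `(MTy', Mle')`, and `Is''` is an
identification space formed over `(Ty ∪ Ty', le ∪ le')` and `(MTy'', Mle'')`. -/
def IsIRSE (R R' : RSystem V A L) (Is'' : CSpace V A L)
    (Ty : Set L) (le : Set (L × L)) (MTy : Set L) (Mle : Set (L × L))
    (Ty' : Set L) (le' : Set (L × L)) (MTy' : Set L) (Mle' : Set (L × L))
    (MTy'' : Set L) (Mle'' : Set (L × L)) : Prop :=
  IsRSystem R Ty le MTy Mle ∧ IsRSystem R' Ty' le' MTy' Mle' ∧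
  IsRSystem (R ∪ R') (Ty ∪ Ty') (le ∪ le') (MTy ∪ MTy') (Mle ∪ Mle') ∧
  IsPartialOrderOn MTy'' Mle'' ∧
  IsPartialOrderOn ((Ty ∪ Ty') ∪ MTy'') ((le ∪ le') ∪ Mle'') ∧
  Is''.Ty = (Ty ∪ Ty') ∪ MTy'' ∧ Is''.le = (le ∪ le') ∪ Mle'' ∧ IsCSpace Is'' ∧
  MTy ∪ MTy' ⊆ MTy'' ∧ Mle ∪ Mle' ⊆ Mle'' ∧
  (∀ x ∈ Is''.G.Tk, x ∉ (R.Gs ∪ R'.Gs).G.Tk → ∃ τ ∈ MTy'', (x, τ) ∈ Is''.G.tl) ∧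
  (∀ x ∈ Is''.G.Tk, (∃ u ∈ Is''.G.Cf, OutputTok Is''.G u x) →
      x ∉ (R.Gs ∪ R'.Gs).G.Tk) ∧
  IsCSpace ((R.Gs ∪ R'.Gs) ∪ Is'') ∧ IsCSpace ((R.Es ∪ R'.Es) ∪ Is'') ∧
  IsCSpace ((R.Is ∪ R'.Is) ∪ Is'') ∧
  Disjoint Is''.C (R.Gs ∪ R'.Gs).C ∧ Disjoint Is''.C (R.Es ∪ R'.Es).C ∧
  Disjoint Is''.C (R.Is ∪ R'.Is).C

/-! ## Trails -/

/-- A trail candidate: a list of arrows together with an associated source and target vertex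
(needed for the empty trail `[]_v`). -/
structure Trail (V A : Type*) where
  arrows : List A
  src : V
  tgt : V

/-- The empty trail `[]_v`. -/
def Trail.nil {V A : Type*} (v : V) : Trail V A := ⟨[], v, v⟩

/-- Concatenation `e ⊕ w` of trails. -/
def Trail.append {V A : Type*} (e w : Trail V A) : Trail V A :=
  ⟨e.arrows ++ w.arrows, e.src, w.tgt⟩

/-- The image of a trail under vertex/arrow maps. -/
def Trail.map {V A : Type*} (fv : V → V) (fa : A → A) (tr : Trail V A) : Trail V A :=
  ⟨tr.arrows.map fa, fv tr.src, fv tr.tgt⟩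

/-- The arrows chain through the graph from `s` to `t`. -/
def ChainIn (g : PreGraph V A L) : List A → V → V → Prop
  | [], s, t => s = t
  | a :: rest, s, t => a ∈ g.Arr ∧ ∃ m, (a, (s, m)) ∈ g.inc ∧ ChainIn g rest m t

/-- `tr` is a trail in `g`. -/
def IsTrailIn (g : PreGraph V A L) (tr : Trail V A) : Prop :=
  tr.arrows.Nodup ∧ ChainIn g tr.arrows tr.src tr.tgt ∧
  tr.src ∈ g.Tk ∪ g.Cf ∧ tr.tgt ∈ g.Tk ∪ g.Cf

/-- A trail is well-formed provided its source and target are tokens. -/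
def WellFormed (g : PreGraph V A L) (tr : Trail V A) : Prop :=
  tr.src ∈ g.Tk ∧ tr.tgt ∈ g.Tk

/-- `tr` is (source-)extendable by the arrow `a`. -/
def ExtendableBy (g : PreGraph V A L) (tr : Trail V A) (a : A) : Prop :=
  a ∈ g.Arr ∧ a ∉ tr.arrows ∧ ∃ s, (a, (s, tr.src)) ∈ g.inc

def Extendable (g : PreGraph V A L) (tr : Trail V A) : Prop :=
  ∃ a, ExtendableBy g tr a

def NonExtendable (g : PreGraph V A L) (tr : Trail V A) : Prop :=
  ¬ Extendable g tr

/-- `TES g tr S` holds iff `S` is the trail extension sequence of the trail `tr` in `g`,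
following the recursive definition of TES. -/
inductive TES (g : PreGraph V A L) : Trail V A → List (Trail V A) → Prop where
  | nonext (tr : Trail V A) (h : NonExtendable g tr) :
      TES g tr [⟨[], tr.src, tr.src⟩]
  | ext (tr : Trail V A) (a : A) (u : V) (ars : List A)
      (Ss : List (List (Trail V A)))
      (hext : ExtendableBy g tr a)
      (hinc : (a, (u, tr.src)) ∈ g.inc)
      (hars : InArrowSeq g u ars)
      (hlen : Ss.length = ars.length)
      (hrec : ∀ (i : ℕ) (ai : A) (si : V) (Si : List (Trail V A)),
          ars[i]? = some ai → Ss[i]? = some Si → (ai, (si, u)) ∈ g.inc →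
          TES g ⟨ai :: a :: tr.arrows, si, tr.tgt⟩ Si) :
      TES g tr (List.flatten (List.zipWith
        (fun (ai : A) (Si : List (Trail V A)) =>
          Si.map (fun e => (⟨e.arrows ++ [ai, a], e.src, tr.src⟩ : Trail V A)))
        ars Ss))

/-- The sequence of sources of a sequence of trails. -/
def srcSeq {V A : Type*} (S : List (Trail V A)) : List V := S.map Trail.src

/-- The right product `S ◁ w`, appending the trail `w` to each trail in `S`. -/
def rprod {V A : Type*} (S : List (Trail V A)) (w : Trail V A) : List (Trail V A) :=
  S.map fun e => e.append w

/-! ## Constructions -/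

/-- Every token is the target of at most one arrow. -/
def UniStructured (g : PreGraph V A L) : Prop :=
  ∀ x ∈ g.Tk, ∀ a ∈ g.Arr, ∀ b ∈ g.Arr,
    (∃ w, (a, (w, x)) ∈ g.inc) → (∃ w, (b, (w, x)) ∈ g.inc) → a = b

/-- `(g, t)` is a construction in the construction space `Cs`: `g` is a finite uni-structured
structure graph (a subgraph of the structure graph of `Cs`), `t` is a token of `g`, and every
vertex of `g` is the source of a trail targeting `t`. -/
def IsConstruction (Cs : CSpace V A L) (g : PreGraph V A L) (t : V) : Prop :=
  g.Subgraph Cs.G ∧ IsStructureGraph Cs.Ty Cs.le Cs.C Cs.sig g ∧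
  g.Tk.Finite ∧ g.Cf.Finite ∧ g.Arr.Finite ∧ UniStructured g ∧ t ∈ g.Tk ∧
  ∀ v ∈ g.Tk ∪ g.Cf, ∃ tr : Trail V A, IsTrailIn g tr ∧ tr.src = v ∧ tr.tgt = t

/-- `(g, t)` is a construction *in* `Cs` in the strong sense: moreover every configurator of `g`
has its full neighbourhood from the structure graph of `Cs`. -/
def IsConstructionIn (Cs : CSpace V A L) (g : PreGraph V A L) (t : V) : Prop :=
  IsConstruction Cs g t ∧ ∀ u ∈ g.Cf, g.Nh u = Cs.G.Nh u

/-- A trivial construction: the construct is its only vertex. -/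
def TrivialC (g : PreGraph V A L) (t : V) : Prop := g.Tk ∪ g.Cf = {t}

/-- A basic construction: exactly one configurator. -/
def BasicC (g : PreGraph V A L) : Prop := ∃ u, g.Cf = {u}

/-- The set of arrows occurring in a sequence of trails. -/
def trailArrowSet {V A : Type*} (TR : List (Trail V A)) : Set A :=
  {a | ∃ tr ∈ TR, a ∈ tr.arrows}

/-- The vertices of the `TR`-graph: vertices incident to arrows of trails of `TR`,
together with the associated vertex of any empty trail of `TR`. -/
def trailVertexSet (g : PreGraph V A L) (TR : List (Trail V A)) : Set V :=
  {v | (∃ a ∈ trailArrowSet TR, ∃ w, (a, (v, w)) ∈ g.inc ∨ (a, (w, v)) ∈ g.inc) ∨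
    ∃ tr ∈ TR, tr.arrows = [] ∧ tr.src = v}

/-- The `TR`-graph `v(TR)`. -/
def trGraph (g : PreGraph V A L) (TR : List (Trail V A)) : PreGraph V A L :=
  g.restrict (trailVertexSet g TR) (trailArrowSet TR)

/-- `((g', t), ics)` is a split of the construction `(g, t)`: `(g', t)` is a generator and
`ics` is the corresponding induced construction sequence (each induced construction is
`(v(TES(tri)), source(tri))`, the TES being computed in `(g, t)`). -/
def IsSplit (Cs : CSpace V A L) (g : PreGraph V A L) (t : V)
    (g' : PreGraph V A L) (ics : List (PreGraph V A L × V)) : Prop :=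
  IsConstruction Cs g' t ∧ g'.Subgraph g ∧
  ∃ trs : List (Trail V A), TES g' (Trail.nil t) trs ∧ ics.length = trs.length ∧
    ∀ (i : ℕ) (tri : Trail V A), trs[i]? = some tri →
      ∃ Si : List (Trail V A), TES g tri Si ∧ ics[i]? = some (trGraph g Si, tri.src)

/-! ## Decompositions -/

/-- A decomposition tree: vertices labelled by a graph and a token, with the incoming arrows
of every vertex given in index order by a list of subtrees. -/
inductive DTree (V A L : Type*) where
  | node : PreGraph V A L → V → List (DTree V A L) → DTree V A L

def DTree.rootGraph : DTree V A L → PreGraph V A L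
  | .node g _ _ => g

def DTree.rootTok : DTree V A L → V
  | .node _ t _ => t

def DTree.kids : DTree V A L → List (DTree V A L)
  | .node _ _ cs => cs

/-- `IsDecompositionOf Cs D g t` holds iff `D` is a decomposition of the construction
`(g, t)` in `Cs`. -/
inductive IsDecompositionOf (Cs : CSpace V A L) : DTree V A L → PreGraph V A L → V → Prop where
  | single (g : PreGraph V A L) (t : V) (h : IsConstruction Cs g t) :
      IsDecompositionOf Cs (.node g t []) g t
  | split (g : PreGraph V A L) (t : V) (g' : PreGraph V A L)
      (ics : List (PreGraph V A L × V)) (cs : List (DTree V A L))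
      (hc : IsConstruction Cs g t)
      (hsplit : IsSplit Cs g t g' ics)
      (hlen : cs.length = ics.length)
      (hrec : ∀ (i : ℕ) (ci : DTree V A L) (gi : PreGraph V A L) (ti : V),
          cs[i]? = some ci → ics[i]? = some (gi, ti) → IsDecompositionOf Cs ci gi ti) :
      IsDecompositionOf Cs (.node g' t cs) g t

/-- `LcsRel D ls` holds iff `ls` is the leaf construction-sequence of `D`. -/
inductive LcsRel : DTree V A L → List (PreGraph V A L × V) → Prop where
  | leaf (g : PreGraph V A L) (t : V) : LcsRel (.node g t []) [(g, t)]
  | node (g : PreGraph V A L) (t : V) (cs : List (DTree V A L))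
      (ls : List (List (PreGraph V A L × V)))
      (hne : cs ≠ []) (hlen : ls.length = cs.length)
      (h : ∀ (i : ℕ) (ci : DTree V A L) (li : List (PreGraph V A L × V)),
          cs[i]? = some ci → ls[i]? = some li → LcsRel ci li) :
      LcsRel (.node g t cs) ls.flatten

/-- `(p, w)` is one of the constructions labelling a vertex of the decomposition tree. -/
inductive LabelOf : DTree V A L → PreGraph V A L → V → Prop where
  | root (g : PreGraph V A L) (t : V) (cs : List (DTree V A L)) :
      LabelOf (.node g t cs) g t
  | child (g : PreGraph V A L) (t : V) (cs : List (DTree V A L))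
      (c : DTree V A L) (p : PreGraph V A L) (w : V) :
      c ∈ cs → LabelOf c p w → LabelOf (.node g t cs) p w

/-- The union of all the graphs labelling vertices of the decomposition tree
(the graph of the construction `ct(D)` of the decomposition `D`). -/
def DTree.ctGraph (D : DTree V A L) : PreGraph V A L :=
  ⟨{x | ∃ p w, LabelOf D p w ∧ x ∈ p.Tk},
   {x | ∃ p w, LabelOf D p w ∧ x ∈ p.Cf},
   {a | ∃ p w, LabelOf D p w ∧ a ∈ p.Arr},
   {q | ∃ p w, LabelOf D p w ∧ q ∈ p.inc},
   {q | ∃ p w, LabelOf D p w ∧ q ∈ p.ia},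
   {q | ∃ p w, LabelOf D p w ∧ q ∈ p.tl},
   {q | ∃ p w, LabelOf D p w ∧ q ∈ p.cl}⟩

/-- Every vertex label of the decomposition tree satisfies `P`. -/
inductive AllLabels (P : PreGraph V A L → V → Prop) : DTree V A L → Prop where
  | node (g : PreGraph V A L) (t : V) (cs : List (DTree V A L)) :
      P g t → (∀ c, c ∈ cs → AllLabels P c) → AllLabels P (.node g t cs)

/-- The subtree of a decomposition tree at a given position (a path of child indices). -/
def subtreeAt : List ℕ → DTree V A L → Option (DTree V A L)
  | [], D => some D
  | i :: rest, .node _ _ cs =>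
    match cs[i]? with
    | some c => subtreeAt rest c
    | none => none

/-! ## Patterns and embeddings -/

/-- An embedding of the graph `g` into the graph `p`: an isomorphism preserving arrow indices
and configurator labels, with token labels respecting the subtype relation `le`. -/
def IsEmbedding (le : Set (L × L)) (g p : PreGraph V A L) (fv : V → V) (fa : A → A) : Prop :=
  (∀ x ∈ g.Tk, fv x ∈ p.Tk) ∧ (∀ x ∈ g.Cf, fv x ∈ p.Cf) ∧
  (∀ x ∈ g.Tk ∪ g.Cf, ∀ y ∈ g.Tk ∪ g.Cf, fv x = fv y → x = y) ∧
  (∀ y ∈ p.Tk, ∃ x ∈ g.Tk, fv x = y) ∧ (∀ y ∈ p.Cf, ∃ x ∈ g.Cf, fv x = y) ∧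
  (∀ a ∈ g.Arr, fa a ∈ p.Arr) ∧
  (∀ a ∈ g.Arr, ∀ b ∈ g.Arr, fa a = fa b → a = b) ∧
  (∀ b ∈ p.Arr, ∃ a ∈ g.Arr, fa a = b) ∧
  (∀ a v w, (a, (v, w)) ∈ g.inc → (fa a, (fv v, fv w)) ∈ p.inc) ∧
  (∀ a n, (a, n) ∈ g.ia → (fa a, n) ∈ p.ia) ∧
  (∀ u c, (u, c) ∈ g.cl → (fv u, c) ∈ p.cl) ∧
  (∀ x τ, (x, τ) ∈ g.tl → ∃ σ, (fv x, σ) ∈ p.tl ∧ (τ, σ) ∈ le)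

/-- The construction `(g, t)` matches the pattern `(p, v)`. -/
def MatchesPattern (le : Set (L × L)) (g : PreGraph V A L) (t : V)
    (p : PreGraph V A L) (v : V) : Prop :=
  ∃ fv fa, IsEmbedding le g p fv fa ∧ fv t = v

/-- `Ps` is a pattern space for `Cs`: a construction space over the same type system and
constructor specification such that every construction of `Cs` matches some construction
of `Ps`. -/
def IsPatternSpace (Cs Ps : CSpace V A L) : Prop :=
  Ps.Ty = Cs.Ty ∧ Ps.le = Cs.le ∧ Ps.C = Cs.C ∧ Ps.sig = Cs.sig ∧ IsCSpace Ps ∧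
  ∀ g t, IsConstruction Cs g t →
    ∃ p v, IsConstruction Ps p v ∧ MatchesPattern Cs.le g t p v

/-- Vertex-wise matching of two same-shape decomposition trees under a common pair of maps. -/
inductive DMatches (le : Set (L × L)) (fv : V → V) (fa : A → A) :
    DTree V A L → DTree V A L → Prop where
  | node (g : PreGraph V A L) (t : V) (p : PreGraph V A L) (v : V)
      (cs ds : List (DTree V A L))
      (hemb : IsEmbedding le g p fv fa) (ht : fv t = v)
      (hlen : cs.length = ds.length)
      (hrec : ∀ (i : ℕ) (ci di : DTree V A L), cs[i]? = some ci → ds[i]? = some di →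
          DMatches le fv fa ci di) :
      DMatches le fv fa (.node g t cs) (.node p v ds)

/-- The decomposition `D` matches the (pattern) decomposition `Δ`: there is an arrow-index
preserving isomorphism of trees together with an embedding of `ct(D)` into `ct(Δ)` whose
restriction to each vertex label is an embedding into the corresponding pattern label. -/
def DecompositionMatches (le : Set (L × L)) (D Δ : DTree V A L) : Prop :=
  ∃ fv fa, IsEmbedding le D.ctGraph Δ.ctGraph fv fa ∧ fv D.rootTok = Δ.rootTok ∧
    DMatches le fv fa D Δ

/-! ## Descriptions -/

/-- A description: a set of decompositions of patterns (constructions in the pattern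
space `Ps`). -/
def IsDescriptionOf (Ps : CSpace V A L) (Ds : Set (DTree V A L)) : Prop :=
  ∀ Δ ∈ Ds, ∃ p v, IsConstruction Ps p v ∧ IsDecompositionOf Ps Δ p v

/-- The description `Ds` is complete for `Cs`. -/
def CompleteDescription (Cs : CSpace V A L) (Ds : Set (DTree V A L)) : Prop :=
  ∀ g t, IsConstruction Cs g t →
    ∃ Δ ∈ Ds, ∃ D, IsDecompositionOf Cs D g t ∧ DecompositionMatches Cs.le D Δ

/-- The set of patterns labelling vertices of decompositions in `Ds`. -/
def PatternsOf (Ds : Set (DTree V A L)) : Set (PreGraph V A L × V) :=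
  {pv | ∃ Δ ∈ Ds, LabelOf Δ pv.1 pv.2}

/-- Label-preserving isomorphism of patterns/constructions. -/
def LabelIsomorphic (g : PreGraph V A L) (t : V) (p : PreGraph V A L) (v : V) : Prop :=
  ∃ fv fa, IsEmbedding {q : L × L | q.1 = q.2} g p fv fa ∧ fv t = v

/-- The description `Ds` is compact: finitely many patterns up to label-preserving
isomorphism. -/
def CompactDescription (Ds : Set (DTree V A L)) : Prop :=
  ∃ Reps : Set (PreGraph V A L × V), Reps.Finite ∧
    ∀ pv ∈ PatternsOf Ds, ∃ qw ∈ Reps, LabelIsomorphic pv.1 pv.2 qw.1 qw.2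

/-! ## Transformation constraints and structural transformations -/

/-- A transformation-constraint-shaped triple: two patterns (or constructions) together with
a set of patterns (or constructions). -/
structure TConstraint (V A L : Type*) where
  pa : PreGraph V A L
  ca : V
  pb : PreGraph V A L
  cb : V
  Pc : Set (PreGraph V A L × V)

/-- The union of the graphs of a set of patterns. -/
def pGraph (P : Set (PreGraph V A L × V)) : PreGraph V A L :=
  ⟨{x | ∃ pv ∈ P, x ∈ pv.1.Tk}, {x | ∃ pv ∈ P, x ∈ pv.1.Cf},
   {a | ∃ pv ∈ P, a ∈ pv.1.Arr}, {q | ∃ pv ∈ P, q ∈ pv.1.inc},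
   {q | ∃ pv ∈ P, q ∈ pv.1.ia}, {q | ∃ pv ∈ P, q ∈ pv.1.tl},
   {q | ∃ pv ∈ P, q ∈ pv.1.cl}⟩

/-- A respectful embedding of the set of patterns `P` into the set of patterns `P'`. -/
def RespectfulEmbedding (le : Set (L × L)) (P P' : Set (PreGraph V A L × V))
    (fv : V → V) (fa : A → A) : Prop :=
  IsEmbedding le (pGraph P) (pGraph P') fv fa ∧
  ∀ pv ∈ P, ∃ qw ∈ P', IsEmbedding le pv.1 qw.1 fv fa ∧ fv pv.2 = qw.2

/-- Satisfaction of one transformation-constraint-shaped triple by another: embeddings of the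
first two components, a respectful embedding of the third, whose common underlying maps give
an isomorphism of the unions of the graphs. -/
def TCSatisfies (le : Set (L × L)) (s s' : TConstraint V A L) : Prop :=
  ∃ fv fa,
    IsEmbedding le s.pa s'.pa fv fa ∧ fv s.ca = s'.ca ∧
    IsEmbedding le s.pb s'.pb fv fa ∧ fv s.cb = s'.cb ∧
    RespectfulEmbedding le s.Pc s'.Pc fv fa ∧
    IsEmbedding le ((s.pa ∪ s.pb) ∪ pGraph s.Pc) ((s'.pa ∪ s'.pb) ∪ pGraph s'.Pc) fv fa

/-- A transformation constraint for an encoding described by `(Ds, Ds', P'')`. -/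
def IsTransformationConstraint (Ds Ds' : Set (DTree V A L))
    (P'' : Set (PreGraph V A L × V)) (s : TConstraint V A L) : Prop :=
  (s.pa, s.ca) ∈ PatternsOf Ds ∧ (s.pb, s.cb) ∈ PatternsOf Ds' ∧ s.Pc ⊆ P''

/-- A constraint assignment for `Δ` and `Δ'`: a partial function (modelled with `Option`) on
pairs of vertices (paths) whose values are transformation constraints from `S0` matched by the
corresponding labels. -/
def IsConstraintAssignment (leR leR' : Set (L × L)) (S0 : Set (TConstraint V A L))
    (Δ Δ' : DTree V A L) (Lm : List ℕ → List ℕ → Option (TConstraint V A L)) : Prop :=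
  ∀ pi pi' s, Lm pi pi' = some s → s ∈ S0 ∧
    (∃ δ, subtreeAt pi Δ = some δ ∧
        MatchesPattern leR δ.rootGraph δ.rootTok s.pa s.ca) ∧
    (∃ δ', subtreeAt pi' Δ' = some δ' ∧
        MatchesPattern leR' δ'.rootGraph δ'.rootTok s.pb s.cb)

/-- The constraint assignment `Lm` is satisfied by the pair of decompositions `(D, D')`
(whose vertices correspond, via the shape-preserving matchings, to those of `Δ`, `Δ'`). -/
def LSatisfiedBy (leI : Set (L × L)) (Ip : CSpace V A L)
    (Lm : List ℕ → List ℕ → Option (TConstraint V A L)) (D D' : DTree V A L) : Prop :=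
  ∀ pi pi' s d d', Lm pi pi' = some s →
    subtreeAt pi D = some d → subtreeAt pi' D' = some d' →
    ∃ Cset : Set (PreGraph V A L × V),
      (∀ pv ∈ Cset, IsConstruction Ip pv.1 pv.2) ∧
      TCSatisfies leI ⟨d.rootGraph, d.rootTok, d'.rootGraph, d'.rootTok, Cset⟩ s

/-- `(g', t')` is a structural `L`-transformation of `(g, t)` (with respect to the pattern
decompositions `Δ`, `Δ'` for the universal spaces `Ru`, `Ru'` and the inter-property
identification space `Ip`). -/
def IsStructuralLTransformation (Ru Ru' Ip : CSpace V A L) (Δ Δ' : DTree V A L)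
    (Lm : List ℕ → List ℕ → Option (TConstraint V A L))
    (g : PreGraph V A L) (t : V) (g' : PreGraph V A L) (t' : V) : Prop :=
  (∃ D, IsDecompositionOf Ru D g t ∧ DecompositionMatches Ru.le D Δ) ∧
  (∃ D', IsDecompositionOf Ru' D' g' t' ∧ DecompositionMatches Ru'.le D' Δ') ∧
  ∀ D D', IsDecompositionOf Ru D g t → DecompositionMatches Ru.le D Δ →
    IsDecompositionOf Ru' D' g' t' → DecompositionMatches Ru'.le D' Δ' →
    LSatisfiedBy Ip.le Ip Lm D D'

/-- Partial satisfaction: the constraint is only checked at vertices of the pattern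
decomposition `Δh` whose label is already a construction in `Ru'`. -/
def LPartialSatisfiedBy (leI : Set (L × L)) (Ip Ru' : CSpace V A L)
    (Lm : List ℕ → List ℕ → Option (TConstraint V A L)) (D Δh : DTree V A L) : Prop :=
  ∀ pi pi' s d δh, Lm pi pi' = some s →
    subtreeAt pi D = some d → subtreeAt pi' Δh = some δh →
    IsConstructionIn Ru' δh.rootGraph δh.rootTok →
    ∃ Cset : Set (PreGraph V A L × V),
      (∀ pv ∈ Cset, IsConstruction Ip pv.1 pv.2) ∧
      TCSatisfies leI ⟨d.rootGraph, d.rootTok, δh.rootGraph, δh.rootTok, Cset⟩ s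

/-- The pattern `(ph, vh)` (a construction in the pattern space `Ps'` for `Ru'`) is a partial
`L`-transformation of the construction `(g, t)`. -/
def IsPartialLTransformation (Ru Ru' Ip Ps' : CSpace V A L) (Δ Δ' : DTree V A L)
    (Lm : List ℕ → List ℕ → Option (TConstraint V A L))
    (g : PreGraph V A L) (t : V) (ph : PreGraph V A L) (vh : V) : Prop :=
  (∃ D, IsDecompositionOf Ru D g t ∧ DecompositionMatches Ru.le D Δ) ∧
  (∃ Δh, IsDecompositionOf Ps' Δh ph vh ∧ DecompositionMatches Ru'.le Δh Δ') ∧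
  ∀ D Δh, IsDecompositionOf Ru D g t → DecompositionMatches Ru.le D Δ →
    IsDecompositionOf Ps' Δh ph vh → DecompositionMatches Ru'.le Δh Δ' →
    LPartialSatisfiedBy Ip.le Ip Ru' Lm D Δh

/-! ## Validity, soundness, leaf instantiation -/

/-- Validity of `Lm` for `(g, t)` and `(p, v)` at the pair of vertices `(pi, pi')`. -/
def ValidAt (Ru Ru' Ip Ps' : CSpace V A L) (Δ Δ' : DTree V A L)
    (Lm : List ℕ → List ℕ → Option (TConstraint V A L))
    (g : PreGraph V A L) (t : V) (p : PreGraph V A L) (v : V)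
    (pi pi' : List ℕ) : Prop :=
  ∀ D Δh Dsub Δhsub Δsub Δsub',
    IsDecompositionOf Ru D g t → DecompositionMatches Ru.le D Δ →
    IsDecompositionOf Ps' Δh p v → DecompositionMatches Ru'.le Δh Δ' →
    subtreeAt pi D = some Dsub → subtreeAt pi' Δh = some Δhsub →
    subtreeAt pi Δ = some Δsub → subtreeAt pi' Δ' = some Δsub' →
    IsConstructionIn Ru' Δhsub.ctGraph Δhsub.rootTok →
    IsStructuralLTransformation Ru Ru' Ip Δsub Δsub'
      (fun σ σ' => Lm (pi ++ σ) (pi' ++ σ'))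
      Dsub.ctGraph Dsub.rootTok Δhsub.ctGraph Δhsub.rootTok

/-- Ancestor-validity: validity at every pair of proper descendants-in-the-tree
("ancestors" in the paper's in-tree terminology). -/
def AncestorValidAt (Ru Ru' Ip Ps' : CSpace V A L) (Δ Δ' : DTree V A L)
    (Lm : List ℕ → List ℕ → Option (TConstraint V A L))
    (g : PreGraph V A L) (t : V) (p : PreGraph V A L) (v : V)
    (pi pi' : List ℕ) : Prop :=
  ∀ σ σ' : List ℕ, σ ≠ [] → σ' ≠ [] →
    (∃ d, subtreeAt (pi ++ σ) Δ = some d) → (∃ d', subtreeAt (pi' ++ σ') Δ' = some d') →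
    ValidAt Ru Ru' Ip Ps' Δ Δ' Lm g t p v (pi ++ σ) (pi' ++ σ')

/-- Soundness of a constraint assignment. -/
def SoundAssignment (Ru Ru' Ip Ps' : CSpace V A L) (Δ Δ' : DTree V A L)
    (Lm : List ℕ → List ℕ → Option (TConstraint V A L)) : Prop :=
  ∀ g t, IsConstructionIn Ru g t →
    (∃ D, IsDecompositionOf Ru D g t ∧ DecompositionMatches Ru.le D Δ) →
    ∀ p v, IsConstruction Ps' p v →
      (∃ Δh, IsDecompositionOf Ps' Δh p v ∧ DecompositionMatches Ru'.le Δh Δ') →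
      ∀ pi pi', (∃ d, subtreeAt pi Δ = some d) → (∃ d', subtreeAt pi' Δ' = some d') →
        AncestorValidAt Ru Ru' Ip Ps' Δ Δ' Lm g t p v pi pi' →
        ValidAt Ru Ru' Ip Ps' Δ Δ' Lm g t p v pi pi'

/-- The pattern `(p, v)` leaf-instantiates `Δ'`: it matches `Δ'` and every leaf of its
`Δ'`-canonical decomposition is labelled by a construction in `Ru'`. -/
def LeafInstantiates (Ru' Ps' : CSpace V A L) (Δ' : DTree V A L)
    (p : PreGraph V A L) (v : V) : Prop :=
  (∃ Δh, IsDecompositionOf Ps' Δh p v ∧ DecompositionMatches Ru'.le Δh Δ') ∧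
  ∀ Δh, IsDecompositionOf Ps' Δh p v → DecompositionMatches Ru'.le Δh Δ' →
    ∀ pi δh, subtreeAt pi Δh = some δh → δh.kids = [] →
      IsConstructionIn Ru' δh.rootGraph δh.rootTok

/-- A complete extension of a pattern `(p, v)` that leaf-instantiates `Δ'`. -/
def CompleteExtension (Ru' Ps' : CSpace V A L) (Δ' : DTree V A L)
    (p : PreGraph V A L) (v : V) (g' : PreGraph V A L) (t' : V) : Prop :=
  IsConstructionIn Ru' g' t' ∧
  ∃ fv fa, IsEmbedding Ru'.le g' p fv fa ∧ fv t' = v ∧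
    ∀ Δh, IsDecompositionOf Ps' Δh p v → DecompositionMatches Ru'.le Δh Δ' →
      ∀ pi δh, subtreeAt pi Δh = some δh → δh.kids = [] →
        ∀ x ∈ δh.rootGraph.Tk, x ∈ g'.Tk ∧ fv x = x

/-- `(g, t)` and `(p, v)` are valid at the leaves of `Δ` and `Δ'`. -/
def ValidAtLeaves (Ru Ru' Ip Ps' : CSpace V A L) (Δ Δ' : DTree V A L)
    (Lm : List ℕ → List ℕ → Option (TConstraint V A L))
    (g : PreGraph V A L) (t : V) (p : PreGraph V A L) (v : V) : Prop :=
  ∀ pi pi' δ δ', subtreeAt pi Δ = some δ → subtreeAt pi' Δ' = some δ' →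
    δ.kids = [] → δ'.kids = [] →
    ValidAt Ru Ru' Ip Ps' Δ Δ' Lm g t p v pi pi'

/-!
Induction on the decomposition. A single vertex is labelled by its construction, and it is never
also the root of a split: every configurator has an input, so the complete trail sequence of a
generator is not empty. At a split the root is labelled by the generator `(g₁, t)`, and by
induction the subtrees determine the induced constructions, so it suffices that a construction is
the union of `g₁` and its induced constructions. An arrow outside `g₁` lies on a trail to `t`
that enters `g₁` at a token `y` which is a leaf of `g₁`. Then `y` is the source of a trail `tr` of
`CTS(g₁, t)`, and `TES(tr)`, computed in `g`, contains the whole segment of that trail before `y`.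
-/

theorem IsFunctionOn.eq {α β : Type*} {R : Set (α × β)} {D : Set α} (hR : IsFunctionOn R D)
    {x : α} {y y' : β} (h : (x, y) ∈ R) (h' : (x, y') ∈ R) : y = y' := by
  obtain ⟨z, -, hz⟩ := hR.2 x (hR.1 _ h)
  exact (hz y h).trans (hz y' h').symm

theorem IsFunctionOn.mem_of_subset {α β : Type*} {R₁ R : Set (α × β)} {D₁ D : Set α}
    (hR₁ : IsFunctionOn R₁ D₁) (hR : IsFunctionOn R D) (hsub : R₁ ⊆ R) {x : α} {y : β}
    (hx : x ∈ D₁) (h : (x, y) ∈ R) : (x, y) ∈ R₁ := by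
  obtain ⟨z, hz, -⟩ := hR₁.2 x hx
  exact hR.eq (hsub hz) h ▸ hz

namespace IsGraph

variable {g : PreGraph V A L} {a : A} {u v w : V}

theorem inc_eq (hg : IsGraph g) {p q : V × V} (hp : (a, p) ∈ g.inc) (hq : (a, q) ∈ g.inc) :
    p = q :=
  hg.2.1.eq hp hq

theorem src_mem (hg : IsGraph g) (h : (a, (v, w)) ∈ g.inc) : v ∈ g.Tk ∪ g.Cf := by
  rcases hg.2.2.1 a v w h with ⟨hv, -⟩ | ⟨hv, -⟩
  exacts [Or.inl hv, Or.inr hv]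

theorem tgt_mem (hg : IsGraph g) (h : (a, (v, w)) ∈ g.inc) : w ∈ g.Tk ∪ g.Cf := by
  rcases hg.2.2.1 a v w h with ⟨-, hw⟩ | ⟨-, hw⟩
  exacts [Or.inr hw, Or.inl hw]

theorem src_mem_Cf (hg : IsGraph g) (h : (a, (u, v)) ∈ g.inc) (hv : v ∈ g.Tk) : u ∈ g.Cf := by
  rcases hg.2.2.1 a u v h with ⟨-, hv'⟩ | ⟨hu, -⟩
  exacts [absurd hv' (Set.disjoint_left.mp hg.1 hv), hu]

theorem src_mem_Tk (hg : IsGraph g) (h : (a, (v, u)) ∈ g.inc) (hu : u ∈ g.Cf) : v ∈ g.Tk := by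
  rcases hg.2.2.1 a v u h with ⟨hv, -⟩ | ⟨-, hu'⟩
  exacts [hv, absurd hu (Set.disjoint_left.mp hg.1 hu')]

end IsGraph

namespace PreGraph

variable {g h : PreGraph V A L}

theorem Subgraph.antisymm (h₁ : g.Subgraph h) (h₂ : h.Subgraph g) : g = h := by
  obtain ⟨tk₁, cf₁, arr₁, inc₁, ia₁, tl₁, cl₁⟩ := h₁
  obtain ⟨tk₂, cf₂, arr₂, inc₂, ia₂, tl₂, cl₂⟩ := h₂
  cases g; cases h
  simp only [mk.injEq]
  exact ⟨tk₁.antisymm tk₂, cf₁.antisymm cf₂, arr₁.antisymm arr₂, inc₁.antisymm inc₂,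
    ia₁.antisymm ia₂, tl₁.antisymm tl₂, cl₁.antisymm cl₂⟩

theorem restrict_subgraph (g : PreGraph V A L) (Vs : Set V) (As : Set A) :
    (g.restrict Vs As).Subgraph g :=
  ⟨Set.inter_subset_left, Set.inter_subset_left, Set.inter_subset_left,
    fun _ hq => hq.1, fun _ hq => hq.1, fun _ hq => hq.1, fun _ hq => hq.1⟩

def IsFullIn (h g : PreGraph V A L) : Prop :=
  (∀ x ∈ g.Tk, x ∈ h.Tk ∪ h.Cf → x ∈ h.Tk) ∧ (∀ x ∈ g.Cf, x ∈ h.Tk ∪ h.Cf → x ∈ h.Cf) ∧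
  (∀ a ∈ h.Arr, ∀ p, (a, p) ∈ g.inc → (a, p) ∈ h.inc) ∧
  (∀ a ∈ h.Arr, ∀ n, (a, n) ∈ g.ia → (a, n) ∈ h.ia) ∧
  (∀ x ∈ h.Tk, ∀ τ, (x, τ) ∈ g.tl → (x, τ) ∈ h.tl) ∧
  (∀ x ∈ h.Cf, ∀ τ, (x, τ) ∈ g.cl → (x, τ) ∈ h.cl)

theorem restrict_isFullIn (g : PreGraph V A L) (Vs : Set V) (As : Set A) :
    (g.restrict Vs As).IsFullIn g := by
  refine ⟨fun x hx hx' => ⟨hx, ?_⟩, fun x hx hx' => ⟨hx, ?_⟩, fun a ha p hp => ⟨hp, ha.2⟩,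
    fun a ha n hn => ⟨hn, ha.2⟩, fun x hx τ hτ => ⟨hτ, hx.2⟩, fun x hx τ hτ => ⟨hτ, hx.2⟩⟩ <;>
  rcases hx' with hx' | hx' <;> exact hx'.2

end PreGraph

theorem IsGraph.isFullIn_of_subgraph {g h : PreGraph V A L} (hg : IsGraph g) (hh : IsGraph h)
    (hsub : h.Subgraph g) : h.IsFullIn g := by
  refine ⟨fun x hx hx' => ?_, fun x hx hx' => ?_, fun a ha p hp => ?_, fun a ha n hn => ?_,
    fun x hx τ hτ => ?_, fun x hx τ hτ => ?_⟩
  · exact hx'.resolve_right fun hc => Set.disjoint_left.mp hg.1 hx (hsub.2.1 hc)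
  · exact hx'.resolve_left fun ht => Set.disjoint_left.mp hg.1 (hsub.1 ht) hx
  · exact hh.2.1.mem_of_subset hg.2.1 hsub.2.2.2.1 ha hp
  · exact hh.2.2.2.1.mem_of_subset hg.2.2.2.1 hsub.2.2.2.2.1 ha hn
  · exact hh.2.2.2.2.1.mem_of_subset hg.2.2.2.2.1 hsub.2.2.2.2.2.1 hx hτ
  · exact hh.2.2.2.2.2.mem_of_subset hg.2.2.2.2.2 hsub.2.2.2.2.2.2 hx hτ

section pGraph

variable {g : PreGraph V A L} {P : Set (PreGraph V A L × V)}

theorem pGraph_subgraph (h : ∀ pv ∈ P, pv.1.Subgraph g) : (pGraph P).Subgraph g := by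
  refine ⟨?_, ?_, ?_, ?_, ?_, ?_, ?_⟩ <;> rintro _ ⟨pv, hpv, hx⟩
  exacts [(h pv hpv).1 hx, (h pv hpv).2.1 hx, (h pv hpv).2.2.1 hx, (h pv hpv).2.2.2.1 hx,
    (h pv hpv).2.2.2.2.1 hx, (h pv hpv).2.2.2.2.2.1 hx, (h pv hpv).2.2.2.2.2.2 hx]

theorem subgraph_pGraph_of_cover (hg : IsGraph g) (hfull : ∀ pv ∈ P, pv.1.IsFullIn g)
    (harr : ∀ a ∈ g.Arr, ∃ pv ∈ P, a ∈ pv.1.Arr)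
    (hvert : ∀ x ∈ g.Tk ∪ g.Cf, ∃ pv ∈ P, x ∈ pv.1.Tk ∪ pv.1.Cf) :
    g.Subgraph (pGraph P) := by
  refine ⟨fun x hx => ?_, fun x hx => ?_, fun a ha => ?_, fun ⟨a, p⟩ hp => ?_,
    fun ⟨a, n⟩ hn => ?_, fun ⟨x, τ⟩ hτ => ?_, fun ⟨x, τ⟩ hτ => ?_⟩
  · obtain ⟨pv, hpv, hx'⟩ := hvert x (Or.inl hx)
    exact ⟨pv, hpv, (hfull pv hpv).1 x hx hx'⟩
  · obtain ⟨pv, hpv, hx'⟩ := hvert x (Or.inr hx)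
    exact ⟨pv, hpv, (hfull pv hpv).2.1 x hx hx'⟩
  · exact harr a ha
  · obtain ⟨pv, hpv, ha⟩ := harr a (hg.2.1.1 _ hp)
    exact ⟨pv, hpv, (hfull pv hpv).2.2.1 a ha p hp⟩
  · obtain ⟨pv, hpv, ha⟩ := harr a (hg.2.2.2.1.1 _ hn)
    exact ⟨pv, hpv, (hfull pv hpv).2.2.2.1 a ha n hn⟩
  · have hx : x ∈ g.Tk := hg.2.2.2.2.1.1 _ hτ
    obtain ⟨pv, hpv, hx'⟩ := hvert x (Or.inl hx)
    exact ⟨pv, hpv, (hfull pv hpv).2.2.2.2.1 x ((hfull pv hpv).1 x hx hx') τ hτ⟩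
  · have hx : x ∈ g.Cf := hg.2.2.2.2.2.1 _ hτ
    obtain ⟨pv, hpv, hx'⟩ := hvert x (Or.inr hx)
    exact ⟨pv, hpv, (hfull pv hpv).2.2.2.2.2 x ((hfull pv hpv).2.1 x hx hx') τ hτ⟩

end pGraph

theorem IsGraph.src_mem_trGraph {g : PreGraph V A L} (hg : IsGraph g) {TR : List (Trail V A)}
    {a : A} {x m : V} (ha : a ∈ (trGraph g TR).Arr) (hinc : (a, (x, m)) ∈ g.inc) :
    x ∈ (trGraph g TR).Tk ∪ (trGraph g TR).Cf := by
  have hx : x ∈ trailVertexSet g TR := Or.inl ⟨a, ha.2, m, Or.inl hinc⟩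
  rcases hg.src_mem hinc with hxT | hxC
  exacts [Or.inl ⟨hxT, hx⟩, Or.inr ⟨hxC, hx⟩]

section ChainIn

variable {g : PreGraph V A L}

theorem chainIn_append {l₁ l₂ : List A} {s v : V} :
    ChainIn g (l₁ ++ l₂) s v ↔ ∃ m, ChainIn g l₁ s m ∧ ChainIn g l₂ m v := by
  induction l₁ generalizing s with
  | nil => exact ⟨fun h => ⟨s, rfl, h⟩, fun ⟨m, (hm : s = m), h⟩ => hm ▸ h⟩
  | cons a l ih =>
    simp only [List.cons_append, ChainIn, ih]
    exact ⟨fun ⟨ha, m, hm, m', h₁, h₂⟩ => ⟨m', ⟨ha, m, hm, h₁⟩, h₂⟩,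
      fun ⟨m', ⟨ha, m, hm, h₁⟩, h₂⟩ => ⟨ha, m, hm, m', h₁, h₂⟩⟩

theorem chainIn_concat {l : List A} {a : A} {s v : V} :
    ChainIn g (l ++ [a]) s v ↔ ∃ m, ChainIn g l s m ∧ a ∈ g.Arr ∧ (a, (m, v)) ∈ g.inc := by
  simp only [chainIn_append, ChainIn, exists_eq_right]

theorem ChainIn.mem_Arr {l : List A} {s v : V} (h : ChainIn g l s v) {a : A} (ha : a ∈ l) :
    a ∈ g.Arr := by
  induction l generalizing s with
  | nil => simp at ha
  | cons b l ih =>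
    obtain ⟨hb, m, -, h⟩ := h
    rcases List.mem_cons.mp ha with rfl | ha
    exacts [hb, ih h ha]

theorem ChainIn.exists_exit (X : Set A) {q : List A} {s t : V} (h : ChainIn g q s t) :
    ∃ p r y, q = p ++ r ∧ (∀ x ∈ p, x ∉ X) ∧ ChainIn g p s y ∧ ChainIn g r y t ∧
      ∀ a ∈ r.head?, a ∈ X := by
  classical
  let P : A → Bool := fun x => decide (x ∉ X)
  have hq : q = q.takeWhile P ++ q.dropWhile P := List.takeWhile_append_dropWhile.symm
  obtain ⟨y, hp, hr⟩ := chainIn_append.mp (hq ▸ h)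
  refine ⟨_, _, y, hq, fun x hx => ?_, hp, hr, fun a ha => ?_⟩
  · simpa [P] using List.mem_takeWhile_imp hx
  · have := List.head?_dropWhile_not P q
    rw [Option.mem_def.mp ha] at this
    simpa [P] using this

end ChainIn

theorem InArrowSeq.mem_iff_of_Nh {g : PreGraph V A L} {u : V} {ars : List A}
    (h : InArrowSeq (g.Nh u) u ars) {a : A} :
    a ∈ ars ↔ a ∈ g.Arr ∧ ∃ w, (a, (w, u)) ∈ g.inc := by
  rw [h.2.1 a]
  exact ⟨fun ⟨ha, w, hw⟩ => ⟨ha.1, w, hw.1⟩,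
    fun ⟨ha, w, hw⟩ => ⟨⟨ha, ha, w, Or.inl hw⟩, w, hw, ha, w, Or.inl hw⟩⟩

namespace IsStructureGraph

variable {Ty : Set L} {le : Set (L × L)} {C : Set L} {sig : Set (L × (List L × L))}
  {g₁ g : PreGraph V A L} {u : V}

theorem exists_inArrow (hsig : ∀ c ins out, (c, (ins, out)) ∈ sig → ins ≠ [])
    (hsg : IsStructureGraph Ty le C sig g) (hu : u ∈ g.Cf) :
    ∃ a w, a ∈ g.Arr ∧ (a, (w, u)) ∈ g.inc := by
  obtain ⟨c, ins, out, -, -, hc, hconf⟩ := hsg.2.2 u hu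
  obtain ⟨ars, hars, hlen, -⟩ := hconf.2.2.2.2.2.2
  obtain ⟨a, ha⟩ := List.exists_mem_of_ne_nil ars fun h =>
    hsig c ins out hc (List.length_eq_zero_iff.mp (h ▸ hlen).symm)
  obtain ⟨haA, w, hw⟩ := hars.mem_iff_of_Nh.mp ha
  exact ⟨a, w, haA, hw⟩

/-- Both neighbourhoods of `u` are configurations of the same constructor, so they have the same
number of incoming arrows. -/
theorem inArrow_mem_of_subgraph (hsig : IsFunctionOn sig C)
    (hsg₁ : IsStructureGraph Ty le C sig g₁) (hsg : IsStructureGraph Ty le C sig g)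
    (hsub : g₁.Subgraph g) (hu : u ∈ g₁.Cf) {a : A} {w : V} (ha : a ∈ g.Arr)
    (hinc : (a, (w, u)) ∈ g.inc) : a ∈ g₁.Arr := by
  obtain ⟨c₁, ins₁, out₁, hcl₁, hc₁, hsig₁, hconf₁⟩ := hsg₁.2.2 u hu
  obtain ⟨c, ins, out, hcl, -, hsigc, hconf⟩ := hsg.2.2 u (hsub.2.1 hu)
  obtain rfl : c₁ = c := hsg.1.2.2.2.2.2.eq (hsub.2.2.2.2.2.2 hcl₁) hcl
  obtain rfl : ins₁ = ins := congrArg Prod.fst (hsig.eq hsig₁ hsigc)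
  obtain ⟨ars₁, hars₁, hlen₁, -⟩ := hconf₁.2.2.2.2.2.2
  obtain ⟨ars, hars, hlen, -⟩ := hconf.2.2.2.2.2.2
  have hsubset : ars₁ ⊆ ars := fun x hx => by
    obtain ⟨hx, w', hw'⟩ := hars₁.mem_iff_of_Nh.mp hx
    exact hars.mem_iff_of_Nh.mpr ⟨hsub.2.2.1 hx, w', hsub.2.2.2.1 hw'⟩
  have hperm : ars₁.Perm ars :=
    (hars₁.1.subperm hsubset).perm_of_length_le (hlen.trans hlen₁.symm).le
  exact (hars₁.mem_iff_of_Nh.mp (hperm.mem_iff.mpr (hars.mem_iff_of_Nh.mpr ⟨ha, w, hinc⟩))).1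

end IsStructureGraph

theorem _root_.List.mem_flatten_zipWith {α β γ : Type*} {f : α → β → List γ} {l₁ : List α}
    {l₂ : List β} {x : γ} :
    x ∈ (List.zipWith f l₁ l₂).flatten ↔
      ∃ (i : ℕ) (a : α) (b : β), l₁[i]? = some a ∧ l₂[i]? = some b ∧ x ∈ f a b := by
  simp only [List.mem_flatten, List.mem_iff_getElem? (l := List.zipWith f l₁ l₂),
    List.getElem?_zipWith_eq_some]
  exact ⟨fun ⟨_, ⟨i, a, b, ha, hb, rfl⟩, hx⟩ => ⟨i, a, b, ha, hb, hx⟩,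
    fun ⟨i, a, b, ha, hb, hx⟩ => ⟨_, ⟨i, a, b, ha, hb, rfl⟩, hx⟩⟩

theorem _root_.List.exists_getElem?_eq_some_of_length_eq {α β : Type*} {l₁ : List α}
    {l₂ : List β} (hlen : l₂.length = l₁.length) {i : ℕ} {a : α} (h : l₁[i]? = some a) :
    ∃ b, l₂[i]? = some b :=
  ⟨_, List.getElem?_eq_getElem (hlen ▸ (List.getElem?_eq_some_iff.mp h).1)⟩

theorem IsCSpace.ins_ne_nil {Cs : CSpace V A L} (hCs : IsCSpace Cs) :
    ∀ c ins out, (c, (ins, out)) ∈ Cs.sig → ins ≠ [] :=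
  fun c ins out h => (hCs.2.2.2.1 c ins out h).1

namespace TES

variable {Ty : Set L} {le : Set (L × L)} {C : Set L} {sig : Set (L × (List L × L))}
  {g : PreGraph V A L} {tr : Trail V A} {S : List (Trail V A)}

theorem tgt_eq (h : TES g tr S) : ∀ e ∈ S, e.tgt = tr.src := by
  induction h with
  | nonext => simp
  | ext tr a u ars Ss =>
    intro e he
    obtain ⟨i, ai, Si, -, -, he⟩ := List.mem_flatten_zipWith.mp he
    obtain ⟨e', -, rfl⟩ := List.mem_map.mp he
    rfl

theorem rprod_nil (h : TES g tr S) : rprod S (Trail.nil tr.src) = S := by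
  conv_rhs => rw [← S.map_id]
  refine List.map_congr_left fun e he => ?_
  have := h.tgt_eq e he
  cases e
  simp_all [Trail.append, Trail.nil]

theorem ne_nil (hsig : ∀ c ins out, (c, (ins, out)) ∈ sig → ins ≠ [])
    (hsg : IsStructureGraph Ty le C sig g) (h : TES g tr S) (hsrc : tr.src ∈ g.Tk) : S ≠ [] := by
  induction h with
  | nonext => simp
  | ext tr a u ars Ss _ hinc hars hlen _ ih =>
    have hu : u ∈ g.Cf := hsg.1.src_mem_Cf hinc hsrc
    obtain ⟨a₀, w₀, ha₀, hw₀⟩ := hsg.exists_inArrow hsig hu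
    obtain ⟨i, hi⟩ := List.mem_iff_getElem?.mp ((hars.2.1 a₀).mpr ⟨ha₀, w₀, hw₀⟩)
    obtain ⟨Si, hSi⟩ := List.exists_getElem?_eq_some_of_length_eq hlen hi
    obtain ⟨e, he⟩ :=
      List.exists_mem_of_ne_nil Si (ih i a₀ w₀ Si hi hSi hw₀ (hsg.1.src_mem_Tk hw₀ hu))
    exact List.ne_nil_of_mem
      (List.mem_flatten_zipWith.mpr ⟨i, a₀, Si, hi, hSi, List.mem_map.mpr ⟨e, he, rfl⟩⟩)

theorem forall_mem_of_extendableBy (hus : UniStructured g) (h : TES g tr S)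
    (hsrc : tr.src ∈ g.Tk) {a : A} (ha : ExtendableBy g tr a) : ∀ e ∈ S, a ∈ e.arrows := by
  cases h with
  | nonext _ hne => exact absurd ⟨a, ha⟩ hne
  | ext _ a' u ars Ss hext =>
    obtain rfl : a = a' := hus _ hsrc a ha.1 a' hext.1 ha.2.2 hext.2.2
    intro e he
    obtain ⟨i, ai, Si, -, -, he⟩ := List.mem_flatten_zipWith.mp he
    obtain ⟨e', -, rfl⟩ := List.mem_map.mp he
    simp

/-- `TES(q ⊕ tr) ◁ q ⊆ TES(tr)`. -/
theorem exists_rprod_subset (hg : IsGraph g) (hus : UniStructured g) (h : TES g tr S)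
    (hsrc : tr.src ∈ g.Tk) {q : List A} {s : V} (hq : ChainIn g q s tr.src) (hs : s ∈ g.Tk)
    (hnd : q.Nodup) (hdisj : q.Disjoint tr.arrows) :
    ∃ S', TES g ⟨q ++ tr.arrows, s, tr.tgt⟩ S' ∧ ∀ e ∈ rprod S' ⟨q, s, tr.src⟩, e ∈ S := by
  induction h generalizing q s with
  | nonext tr hne =>
    rcases List.eq_nil_or_concat' q with rfl | ⟨q₀, c, rfl⟩
    · obtain rfl : s = tr.src := hq
      have hT := TES.nonext tr hne
      exact ⟨_, hT, fun e he => hT.rprod_nil ▸ he⟩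
    · obtain ⟨m, -, hc, hcinc⟩ := chainIn_concat.mp hq
      exact absurd ⟨c, hc, fun hct => hdisj (by simp) hct, m, hcinc⟩ hne
  | ext tr a u ars Ss hext hinc hars hlen hrec ih =>
    rcases List.eq_nil_or_concat' q with rfl | ⟨q₀, c, rfl⟩
    · obtain rfl : s = tr.src := hq
      have hT := TES.ext tr a u ars Ss hext hinc hars hlen hrec
      exact ⟨_, hT, fun e he => hT.rprod_nil ▸ he⟩
    obtain ⟨m, hq₀, hc, hcinc⟩ := chainIn_concat.mp hq
    obtain rfl : c = a := hus _ hsrc c hc a hext.1 ⟨m, hcinc⟩ hext.2.2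
    obtain rfl : m = u := congrArg Prod.fst (hg.inc_eq hcinc hinc)
    have hm : m ∈ g.Cf := hg.src_mem_Cf hcinc hsrc
    rcases List.eq_nil_or_concat' q₀ with rfl | ⟨q₁, c', rfl⟩
    · obtain rfl : s = m := hq₀
      exact absurd hs (Set.disjoint_right.mp hg.1 hm)
    obtain ⟨m', hq₁, hc', hc'inc⟩ := chainIn_concat.mp hq₀
    obtain ⟨j, hj⟩ := List.mem_iff_getElem?.mp ((hars.2.1 c').mpr ⟨hc', m', hc'inc⟩)
    obtain ⟨Sj, hSj⟩ := List.exists_getElem?_eq_some_of_length_eq hlen hj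
    rw [List.append_assoc, List.nodup_append] at hnd
    rw [List.append_assoc, List.disjoint_append_left] at hdisj
    obtain ⟨S', hS', hsub⟩ := ih j c' m' Sj hj hSj hc'inc (hg.src_mem_Tk hc'inc hm) hq₁ hs hnd.1
      (List.disjoint_append_right.mpr ⟨fun x hx hx' => hnd.2.2 x hx x hx' rfl, hdisj.1⟩)
    refine ⟨S', by simpa using hS', fun e he => ?_⟩
    obtain ⟨e', he', rfl⟩ := List.mem_map.mp he
    rw [List.mem_flatten_zipWith]
    refine ⟨j, c', Sj, hj, hSj, List.mem_map.mpr ⟨_, hsub _ (List.mem_map_of_mem he'), ?_⟩⟩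
    simp [Trail.append]

theorem mem_of_leaf (hg : IsGraph g) (hus : UniStructured g) (h : TES g tr S)
    (hsrc : tr.src ∈ g.Tk) {q : List A} {s : V} (hq : ChainIn g q s tr.src) (hs : s ∈ g.Tk)
    (hnd : q.Nodup) (hdisj : q.Disjoint tr.arrows)
    (hleaf : ∀ a ∈ g.Arr, ∀ v, (a, (v, s)) ∉ g.inc) : ⟨q, s, tr.src⟩ ∈ S := by
  obtain ⟨S', hS', hsub⟩ := h.exists_rprod_subset hg hus hsrc hq hs hnd hdisj
  cases hS' with
  | nonext => exact hsub _ (List.mem_singleton_self _)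
  | ext _ a _ _ _ hext =>
    obtain ⟨v, hv⟩ := hext.2.2
    exact absurd hv (hleaf a hext.1 v)

theorem exists_mem_subset (hsig : ∀ c ins out, (c, (ins, out)) ∈ sig → ins ≠ [])
    (hsg : IsStructureGraph Ty le C sig g) (hus : UniStructured g) (h : TES g tr S)
    (hsrc : tr.src ∈ g.Tk) {q : List A} {s : V} (hq : ChainIn g q s tr.src) (hnd : q.Nodup)
    (hdisj : q.Disjoint tr.arrows) : ∃ e ∈ S, q ⊆ e.arrows := by
  have hg := hsg.1
  by_cases hs : s ∈ g.Tk
  · obtain ⟨S', hS', hsub⟩ := h.exists_rprod_subset hg hus hsrc hq hs hnd hdisj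
    obtain ⟨e, he⟩ := List.exists_mem_of_ne_nil S' (hS'.ne_nil hsig hsg hs)
    exact ⟨_, hsub _ (List.mem_map_of_mem he), List.subset_append_right _ _⟩
  -- `s` is a configurator, so `q` starts with its output arrow `b`, which extends the rest.
  obtain _ | ⟨b, q⟩ := q
  · exact absurd ((hq : s = tr.src) ▸ hsrc) hs
  obtain ⟨hb, m, hbinc, hq⟩ := hq
  have hm : m ∈ g.Tk := ((hg.2.2.1 b s m hbinc).resolve_left fun h => hs h.1).2
  have hbq : b ∉ q ++ tr.arrows := by simp_all
  rw [List.nodup_cons] at hnd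
  obtain ⟨S', hS', hsub⟩ :=
    h.exists_rprod_subset hg hus hsrc hq hm hnd.2 (List.disjoint_cons_left.mp hdisj).2
  obtain ⟨e, he⟩ := List.exists_mem_of_ne_nil S' (hS'.ne_nil hsig hsg hm)
  have hbe : b ∈ e.arrows := hS'.forall_mem_of_extendableBy hus hm ⟨hb, hbq, s, hbinc⟩ e he
  refine ⟨_, hsub _ (List.mem_map_of_mem he), List.cons_subset.mpr ⟨?_, ?_⟩⟩
  · exact List.mem_append_left _ hbe
  · exact List.subset_append_right _ _

end TES

namespace IsConstruction

variable {Cs : CSpace V A L} {g : PreGraph V A L} {t : V}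

theorem isStructureGraph (hc : IsConstruction Cs g t) :
    IsStructureGraph Cs.Ty Cs.le Cs.C Cs.sig g :=
  hc.2.1

theorem isGraph (hc : IsConstruction Cs g t) : IsGraph g :=
  hc.2.1.1

theorem uniStructured (hc : IsConstruction Cs g t) : UniStructured g :=
  hc.2.2.2.2.2.1

theorem root_mem (hc : IsConstruction Cs g t) : t ∈ g.Tk :=
  hc.2.2.2.2.2.2.1

theorem exists_chain (hc : IsConstruction Cs g t) {v : V} (hv : v ∈ g.Tk ∪ g.Cf) :
    ∃ q, q.Nodup ∧ ChainIn g q v t := by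
  obtain ⟨w, ⟨hnd, hch, -⟩, rfl, rfl⟩ := hc.2.2.2.2.2.2.2 v hv
  exact ⟨w.arrows, hnd, hch⟩

theorem exists_chain_cons (hc : IsConstruction Cs g t) {b : A} {s m : V} (hb : b ∈ g.Arr)
    (hinc : (b, (s, m)) ∈ g.inc) : ∃ q, (b :: q).Nodup ∧ ChainIn g (b :: q) s t := by
  obtain ⟨w, hnd, hch⟩ := hc.exists_chain (hc.isGraph.tgt_mem hinc)
  by_cases hbw : b ∈ w
  · obtain ⟨w₁, w₂, rfl⟩ := List.append_of_mem hbw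
    obtain ⟨s', -, -, m', hinc', hw₂⟩ := chainIn_append.mp hch
    obtain rfl : s' = s := congrArg Prod.fst (hc.isGraph.inc_eq hinc' hinc)
    exact ⟨w₂, (List.nodup_append.mp hnd).2.1, hb, m', hinc', hw₂⟩
  · exact ⟨w, List.nodup_cons.mpr ⟨hbw, hnd⟩, hb, m, hinc, hch⟩

end IsConstruction

theorem exists_leaf_entry {Ty : Set L} {le : Set (L × L)} {C : Set L}
    {sig : Set (L × (List L × L))} {g₁ g : PreGraph V A L} (hsig : IsFunctionOn sig C)
    (hsg₁ : IsStructureGraph Ty le C sig g₁) (hsg : IsStructureGraph Ty le C sig g)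
    (hsub : g₁.Subgraph g) (hus : UniStructured g) {b : A} {q : List A} {s t : V}
    (hq : ChainIn g (b :: q) s t) (hb : b ∉ g₁.Arr) (ht : t ∈ g₁.Tk) :
    ∃ p y, b ∈ p ∧ p.Sublist (b :: q) ∧ (∀ x ∈ p, x ∉ g₁.Arr) ∧ ChainIn g p s y ∧ y ∈ g₁.Tk ∧
      ∀ a ∈ g₁.Arr, ∀ v, (a, (v, y)) ∉ g₁.inc := by
  obtain ⟨p, r, y, hpr, hp, hpch, hrch, hr⟩ := hq.exists_exit g₁.Arr
  have hbp : b ∈ p := by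
    rcases p with _ | ⟨b', p⟩
    · obtain rfl : b :: q = r := hpr
      exact absurd (hr b rfl) hb
    · obtain ⟨rfl, -⟩ := List.cons.inj hpr
      exact List.mem_cons_self
  obtain ⟨p₀, c, rfl⟩ := (List.eq_nil_or_concat' p).resolve_left (List.ne_nil_of_mem hbp)
  obtain ⟨m, -, hc, hcinc⟩ := chainIn_concat.mp hpch
  have hc₁ : c ∉ g₁.Arr := hp c (by simp)
  have hy : y ∈ g₁.Tk ∪ g₁.Cf := by
    rcases r with _ | ⟨a, r⟩
    · exact Or.inl ((hrch : y = t) ▸ ht)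
    · obtain ⟨-, m', hainc, -⟩ := hrch
      exact hsg₁.1.src_mem
        (hsg₁.1.2.1.mem_of_subset hsg.1.2.1 hsub.2.2.2.1 (hr a rfl) hainc)
  have hyTk : y ∈ g₁.Tk :=
    hy.resolve_right fun hyC => hc₁ (hsg₁.inArrow_mem_of_subgraph hsig hsg hsub hyC hc hcinc)
  refine ⟨p₀ ++ [c], y, hbp, hpr ▸ List.sublist_append_left _ _, hp, hpch, hyTk,
    fun a ha v hav => hc₁ ?_⟩
  obtain rfl : a = c := hus y (hsub.1 hyTk) a (hsub.2.2.1 ha) c hc ⟨v, hsub.2.2.2.1 hav⟩ ⟨m, hcinc⟩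
  exact ha

section Split

variable {Cs : CSpace V A L} {g g₁ : PreGraph V A L} {t : V}

theorem exists_mem_trailArrowSet (hCs : IsCSpace Cs) (hc : IsConstruction Cs g t)
    (hgen : IsConstruction Cs g₁ t) (hsub : g₁.Subgraph g) {trs : List (Trail V A)}
    (htrs : TES g₁ (Trail.nil t) trs) {b : A} (hb : b ∈ g.Arr) (hb₁ : b ∉ g₁.Arr) :
    ∃ tr ∈ trs, ∀ S, TES g tr S → b ∈ trailArrowSet S := by
  obtain ⟨⟨s, m⟩, hinc, -⟩ := hc.isGraph.2.1.2 b hb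
  obtain ⟨q, hnd, hq⟩ := hc.exists_chain_cons hb hinc
  obtain ⟨p, y, hbp, hpq, hp, hpch, hy, hleaf⟩ := exists_leaf_entry hCs.2.2.1
    hgen.isStructureGraph hc.isStructureGraph hsub hc.uniStructured hq hb₁ hgen.root_mem
  obtain ⟨w, hwnd, hw⟩ := hgen.exists_chain (Or.inl hy)
  have hmem : (⟨w, y, t⟩ : Trail V A) ∈ trs := htrs.mem_of_leaf hgen.isGraph hgen.uniStructured
    hgen.root_mem hw hy hwnd (List.disjoint_nil_right _) hleaf
  refine ⟨_, hmem, fun S hS => ?_⟩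
  obtain ⟨e, he, hpe⟩ := hS.exists_mem_subset hCs.ins_ne_nil hc.isStructureGraph
    hc.uniStructured (hsub.1 hy) hpch (hnd.sublist hpq) fun x hxp hxw => hp x hxp (hw.mem_Arr hxw)
  exact ⟨e, he, hpe hbp⟩

theorem IsSplit.exists_eq_trGraph {ics : List (PreGraph V A L × V)}
    (hs : IsSplit Cs g t g₁ ics) : ∀ pv ∈ ics, ∃ S, pv.1 = trGraph g S := by
  obtain ⟨-, -, trs, -, hlen, hics⟩ := hs
  intro pv hpv
  obtain ⟨i, hi⟩ := List.mem_iff_getElem?.mp hpv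
  obtain ⟨tr, htr⟩ := List.exists_getElem?_eq_some_of_length_eq hlen.symm hi
  obtain ⟨S, -, hS⟩ := hics i tr htr
  exact ⟨S, by rw [hi, Option.some.injEq] at hS; rw [hS]⟩

theorem IsSplit.exists_mem_Arr {ics : List (PreGraph V A L × V)} (hCs : IsCSpace Cs)
    (hc : IsConstruction Cs g t) (hs : IsSplit Cs g t g₁ ics) {a : A} (ha : a ∈ g.Arr) :
    ∃ pv ∈ (g₁, t) :: ics, a ∈ pv.1.Arr := by
  obtain ⟨hgen, hsub, trs, htrs, -, hics⟩ := hs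
  by_cases ha₁ : a ∈ g₁.Arr
  · exact ⟨_, List.mem_cons_self, ha₁⟩
  obtain ⟨tr, htr, hcov⟩ := exists_mem_trailArrowSet hCs hc hgen hsub htrs ha ha₁
  obtain ⟨i, hi⟩ := List.mem_iff_getElem?.mp htr
  obtain ⟨S, hS, hS'⟩ := hics i tr hi
  exact ⟨_, List.mem_cons_of_mem _ (List.mem_of_getElem? hS'), ha, hcov S hS⟩

theorem IsSplit.eq_pGraph {ics : List (PreGraph V A L × V)} (hCs : IsCSpace Cs)
    (hc : IsConstruction Cs g t) (hs : IsSplit Cs g t g₁ ics) :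
    g = pGraph {pv | pv ∈ (g₁, t) :: ics} := by
  have hg := hc.isGraph
  have hgen := hs.1
  have hsrc : ∀ pv ∈ (g₁, t) :: ics, ∀ a ∈ pv.1.Arr, ∀ x m, (a, (x, m)) ∈ g.inc →
      x ∈ pv.1.Tk ∪ pv.1.Cf := by
    rintro pv (_ | ⟨_, hpv⟩) a ha x m hinc
    · exact hgen.isGraph.src_mem (hgen.isGraph.2.1.mem_of_subset hg.2.1 hs.2.1.2.2.2.1 ha hinc)
    · obtain ⟨S, hS⟩ := hs.exists_eq_trGraph pv hpv
      exact hS ▸ hg.src_mem_trGraph (hS ▸ ha) hinc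
  refine PreGraph.Subgraph.antisymm
    (subgraph_pGraph_of_cover hg ?_ (fun _ => hs.exists_mem_Arr hCs hc) ?_) (pGraph_subgraph ?_)
  · rintro pv (_ | ⟨_, hpv⟩)
    · exact hg.isFullIn_of_subgraph hgen.isGraph hs.2.1
    · obtain ⟨S, hS⟩ := hs.exists_eq_trGraph pv hpv
      exact hS ▸ g.restrict_isFullIn _ _
  · intro x hx
    by_cases hxt : x = t
    · exact ⟨_, List.mem_cons_self, by rw [hxt]; exact Or.inl hgen.root_mem⟩
    obtain ⟨_ | ⟨a, q⟩, -, hq⟩ := hc.exists_chain hx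
    · exact absurd hq hxt
    obtain ⟨ha, m, hinc, -⟩ := hq
    obtain ⟨pv, hpv, ha'⟩ := hs.exists_mem_Arr hCs hc ha
    exact ⟨pv, hpv, hsrc pv hpv a ha' x m hinc⟩
  · rintro pv (_ | ⟨_, hpv⟩)
    · exact hs.2.1
    · obtain ⟨S, hS⟩ := hs.exists_eq_trGraph pv hpv
      exact hS ▸ g.restrict_subgraph _ _

theorem IsSplit.ics_ne_nil {ics : List (PreGraph V A L × V)} (hCs : IsCSpace Cs)
    (hs : IsSplit Cs g t g₁ ics) : ics ≠ [] := by
  obtain ⟨hgen, -, trs, htrs, hlen, -⟩ := hs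
  rintro rfl
  exact htrs.ne_nil hCs.ins_ne_nil hgen.isStructureGraph hgen.root_mem
    (List.length_eq_zero_iff.mp hlen.symm)

end Split

theorem decomposition_determines_construction_general {V A L : Type*}
    (Cs : CSpace V A L) (hCs : IsCSpace Cs)
    (g g' : PreGraph V A L) (t t' : V)
    (D : DTree V A L)
    (hD : IsDecompositionOf Cs D g t) (hD' : IsDecompositionOf Cs D g' t') :
    g = g' ∧ t = t' := by
  induction hD generalizing g' t' with
  | single g t _ =>
    cases hD' with
    | single => exact ⟨rfl, rfl⟩
    | split _ _ _ _ _ _ hs hlen =>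
      exact absurd (List.length_eq_zero_iff.mp hlen.symm) (hs.ics_ne_nil hCs)
  | split g t g₁ ics cs hc hs hlen _ ih =>
    cases hD' with
    | single => exact absurd (List.length_eq_zero_iff.mp hlen.symm) (hs.ics_ne_nil hCs)
    | split _ _ _ ics' _ hc' hs' hlen' hrec' =>
      have hics : ics = ics' := by
        refine List.ext_getElem (hlen.symm.trans hlen') fun i hi hi' => ?_
        have hcs : cs[i]? = some (cs[i]'(hlen ▸ hi)) := List.getElem?_eq_getElem _
        obtain ⟨hgi, hti⟩ := ih i _ ics[i].1 ics[i].2 hcs (by simp) _ _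
          (hrec' i _ ics'[i].1 ics'[i].2 hcs (by simp))
        exact Prod.ext hgi hti
      exact ⟨by rw [hs.eq_pGraph hCs hc, hs'.eq_pGraph hCs hc', hics], rfl⟩

/-- a decomposition is a decomposition of a unique construction. -/
theorem decomposition_determines_construction {V A L : Type*}
    (Cs : CSpace V A L) (hCs : IsCSpace Cs)
    (g g' : PreGraph V A L) (t t' : V)
    (hg : IsConstruction Cs g t) (hg' : IsConstruction Cs g' t')
    (D : DTree V A L)
    (hD : IsDecompositionOf Cs D g t) (hD' : IsDecompositionOf Cs D g' t') :
    g = g' ∧ t = t' :=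
  decomposition_determines_construction_general Cs hCs g g' t t' D hD hD'

end RST
end

section
/- Let (g, t) be a construction in a construction space matching a pattern (p, v), with embedding f : (g, t) → (p, v). Then: (1) if CTS(g, t) = [[a_{1,1},…,a_{j,1}],…,[a_{1,n},…,a_{k,n}]] then CTS(p, v) = [[f(a_{1,1}),…,f(a_{j,1})],…,[f(a_{1,n}),…,f(a_{k,n})]] (i.e. CTS(p, v) is the arrow-wise image under f of CTS(g, t)); (2) if Ft(g, t) = [t1,…,tn] then Ft(p, v) = [f(t1),…,f(tn)]; and (3) the foundation type-sequence Fy(g, t) is a specialisation of Fy(p, v). -/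
namespace RST

variable {V A L : Type*}

/-!
Both complete trail sequences are computed by the same recursion, and an embedding
is a bijection on vertices and arrows that preserves incidence and arrow indices, so it maps
every step of the recursion for `g` to the corresponding step for `p`: non-extendable trails to
non-extendable trails, the extending arrow to the extending arrow, and the incoming arrows of a
configurator, in index order, to those of its image. Since the TES of a trail from a token is
unique in a uni-structured graph, the image of `CTS(g, t)` is `CTS(p, v)`; the sources, and hence
the foundation sequences, correspond, and the type condition on embeddings gives the
specialisation.
-/

section

variable {α β : Type*} {le : Set (L × L)} {g p : PreGraph V A L} {fv : V → V} {fa : A → A}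

lemma IsFunctionOn.eq_of_mem {R : Set (α × β)} {D : Set α} (h : IsFunctionOn R D)
    {x : α} {y y' : β} (hy : (x, y) ∈ R) (hy' : (x, y') ∈ R) : y = y' := by
  obtain ⟨z, -, hz⟩ := h.2 x (h.1 _ hy)
  exact (hz y hy).trans (hz y' hy').symm

lemma IsGraph.inc_eq_s13 {a : A} {x y x' y' : V} (hg : IsGraph g) (h : (a, (x, y)) ∈ g.inc)
    (h' : (a, (x', y')) ∈ g.inc) : x = x' ∧ y = y' :=
  Prod.mk.inj (hg.2.1.eq_of_mem h h')

lemma IsGraph.tgt_mem_s13 {a : A} {x y : V} (hg : IsGraph g) (h : (a, (x, y)) ∈ g.inc) :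
    y ∈ g.Tk ∪ g.Cf := by
  rcases hg.2.2.1 a x y h with ⟨-, hy⟩ | ⟨-, hy⟩
  exacts [Or.inr hy, Or.inl hy]

lemma IsGraph.src_mem_Cf_s13 {a : A} {u x : V} (hg : IsGraph g) (h : (a, (u, x)) ∈ g.inc)
    (hx : x ∈ g.Tk) : u ∈ g.Cf := by
  rcases hg.2.2.1 a u x h with ⟨-, hx'⟩ | ⟨hu, -⟩
  exacts [absurd hx' (Set.disjoint_left.mp hg.1 hx), hu]

lemma IsGraph.src_mem_Tk_s13 {a : A} {x u : V} (hg : IsGraph g) (h : (a, (x, u)) ∈ g.inc)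
    (hu : u ∈ g.Cf) : x ∈ g.Tk := by
  rcases hg.2.2.1 a x u h with ⟨hx, -⟩ | ⟨-, hu'⟩
  exacts [hx, absurd hu (Set.disjoint_left.mp hg.1 hu')]

/-- The incoming arrows of a configurator are determined by their indices: the arrow at
position `i` is the unique incoming arrow with index `i + 1`. -/
lemma InArrowSeq.eq {u : V} {l l' : List A} (hia : IsFunctionOn g.ia g.Arr)
    (hl : InArrowSeq g u l) (hl' : InArrowSeq g u l') : l = l' := by
  have getElem?_eq : ∀ {l l' : List A}, InArrowSeq g u l → InArrowSeq g u l' →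
      ∀ {i : ℕ} {a : A}, l[i]? = some a → l'[i]? = some a := by
    intro l l' hl hl' i a hi
    have ha := (hl.2.1 a).mp (List.mem_of_getElem? hi)
    obtain ⟨j, hj, rfl⟩ := List.getElem_of_mem ((hl'.2.1 _).mpr ha)
    have hj' : l'[j]? = some l'[j] := List.getElem?_eq_getElem hj
    have hij : i + 1 = j + 1 := hia.eq_of_mem (hl.2.2 i _ hi) (hl'.2.2 j _ hj')
    rwa [Nat.succ_injective hij]
  refine List.ext_getElem? fun i => ?_
  rcases hi : l[i]? with _ | a
  · rcases hi' : l'[i]? with _ | b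
    · rfl
    · simpa [hi] using getElem?_eq hl' hl hi'
  · exact (getElem?_eq hl hl' hi).symm

theorem TES.eq (hg : IsGraph g) (hu : UniStructured g) {tr : Trail V A} {S S' : List (Trail V A)}
    (h : TES g tr S) (h' : TES g tr S') (hsrc : tr.src ∈ g.Tk) : S = S' := by
  induction h generalizing S' with
  | nonext tr hne =>
    cases h' with
    | nonext => rfl
    | ext _ a _ _ _ hext => exact absurd ⟨a, hext⟩ hne
  | ext tr a u ars Ss hext hinc hars hlen hrec ih =>
    cases h' with
    | nonext _ hne => exact absurd ⟨a, hext⟩ hne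
    | ext _ a' u' ars' Ss' hext' hinc' hars' hlen' hrec' =>
      obtain rfl : a = a' := hu tr.src hsrc a hext.1 a' hext'.1 ⟨_, hinc⟩ ⟨_, hinc'⟩
      obtain rfl : u = u' := (hg.inc_eq_s13 hinc hinc').1
      obtain rfl : ars = ars' := hars.eq hg.2.2.2.1 hars'
      have huCf : u ∈ g.Cf := hg.src_mem_Cf_s13 hinc hsrc
      suffices Ss = Ss' by rw [this]
      refine List.ext_getElem? fun i => ?_
      by_cases hi : i < ars.length
      · have hai : ars[i]? = some ars[i] := List.getElem?_eq_getElem hi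
        have hSi : Ss[i]? = some (Ss[i]'(by omega)) := List.getElem?_eq_getElem _
        have hSi' : Ss'[i]? = some (Ss'[i]'(by omega)) := List.getElem?_eq_getElem _
        obtain ⟨-, si, hsi⟩ := (hars.2.1 _).mp (List.getElem_mem hi)
        rw [hSi, hSi', ih i _ si _ hai hSi hsi (hrec' i _ si _ hai hSi' hsi)
          (hg.src_mem_Tk_s13 hsi huCf)]
      · rw [List.getElem?_eq_none (by omega), List.getElem?_eq_none (by omega)]

lemma IsEmbedding.exists_inc_of_inc_map (hemb : IsEmbedding le g p fv fa) (hg : IsGraph g)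
    (hp : IsGraph p) {a : A} {y w : V} (ha : a ∈ g.Arr)
    (hy : y ∈ g.Tk ∪ g.Cf) (hw : (fa a, (w, fv y)) ∈ p.inc) :
    ∃ x, (a, (x, y)) ∈ g.inc ∧ fv x = w := by
  obtain ⟨-, -, hvinj, -, -, -, -, -, hinc, -⟩ := hemb
  obtain ⟨⟨x, y'⟩, hxy, -⟩ := hg.2.1.2 a ha
  obtain ⟨hx, hy'⟩ := hp.inc_eq_s13 (hinc _ _ _ hxy) hw
  obtain rfl := hvinj y' (hg.tgt_mem_s13 hxy) y hy hy'
  exact ⟨x, hxy, hx⟩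

lemma IsEmbedding.nonExtendable_map (hemb : IsEmbedding le g p fv fa) (hg : IsGraph g)
    (hp : IsGraph p) {tr : Trail V A} (hne : NonExtendable g tr)
    (hsrc : tr.src ∈ g.Tk) : NonExtendable p (tr.map fv fa) := by
  obtain ⟨-, -, hasurj, -⟩ := hemb.2.2.2.2.2
  rintro ⟨b, hb, hbtr, s, hbs⟩
  obtain ⟨a, ha, rfl⟩ := hasurj b hb
  obtain ⟨x, hx, -⟩ := hemb.exists_inc_of_inc_map hg hp ha (Or.inl hsrc) hbs
  exact hne ⟨a, ha, fun hatr => hbtr (List.mem_map_of_mem hatr), x, hx⟩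

lemma IsEmbedding.inArrowSeq_map (hemb : IsEmbedding le g p fv fa) (hg : IsGraph g)
    (hp : IsGraph p) {u : V} {ars : List A} (hu : u ∈ g.Cf)
    (hars : InArrowSeq g u ars) : InArrowSeq p (fv u) (ars.map fa) := by
  obtain ⟨hArr, hainj, hasurj, hinc, hia, -⟩ := hemb.2.2.2.2.2
  have hsub : ∀ b ∈ ars, b ∈ g.Arr := fun b hb => ((hars.2.1 b).mp hb).1
  refine ⟨hars.1.map_on fun a ha b hb => hainj a (hsub a ha) b (hsub b hb), fun b => ?_,
    fun i b hb => ?_⟩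
  · constructor
    · rintro hb
      obtain ⟨a, ha, rfl⟩ := List.mem_map.mp hb
      obtain ⟨haArr, w, hw⟩ := (hars.2.1 a).mp ha
      exact ⟨hArr a haArr, fv w, hinc _ _ _ hw⟩
    · rintro ⟨hb, w, hw⟩
      obtain ⟨a, ha, rfl⟩ := hasurj b hb
      obtain ⟨x, hx, -⟩ := hemb.exists_inc_of_inc_map hg hp ha (Or.inr hu) hw
      exact List.mem_map_of_mem ((hars.2.1 a).mpr ⟨ha, x, hx⟩)
  · rw [List.getElem?_map, Option.map_eq_some_iff] at hb
    obtain ⟨a, ha, rfl⟩ := hb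
    exact hia _ _ (hars.2.2 i a ha)

lemma IsEmbedding.extendableBy_map (hemb : IsEmbedding le g p fv fa) {tr : Trail V A} {a : A}
    (hext : ExtendableBy g tr a) (harr : ∀ b ∈ tr.arrows, b ∈ g.Arr) :
    ExtendableBy p (tr.map fv fa) (fa a) := by
  obtain ⟨hArr, hainj, -, hinc, -⟩ := hemb.2.2.2.2.2
  obtain ⟨ha, hatr, s, hs⟩ := hext
  refine ⟨hArr a ha, fun hmem => ?_, fv s, hinc _ _ _ hs⟩
  obtain ⟨b, hb, hba⟩ := List.mem_map.mp hmem
  exact hatr (hainj b (harr b hb) a ha hba ▸ hb)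

theorem IsEmbedding.TES_map (hemb : IsEmbedding le g p fv fa) (hg : IsGraph g) (hp : IsGraph p)
    {tr : Trail V A} {S : List (Trail V A)} (h : TES g tr S) (hsrc : tr.src ∈ g.Tk)
    (harr : ∀ b ∈ tr.arrows, b ∈ g.Arr) :
    TES p (tr.map fv fa) (S.map (Trail.map fv fa)) := by
  induction h with
  | nonext tr hne => exact TES.nonext _ (hemb.nonExtendable_map hg hp hne hsrc)
  | ext tr a u ars Ss hext hau hars hlen hrec ih =>
    obtain ⟨-, -, -, hinc, -⟩ := hemb.2.2.2.2.2
    have hu : u ∈ g.Cf := hg.src_mem_Cf_s13 hau hsrc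
    have hrec' : ∀ (i : ℕ) (bi : A) (si' : V) (Si' : List (Trail V A)),
        (ars.map fa)[i]? = some bi → (Ss.map (List.map (Trail.map fv fa)))[i]? = some Si' →
        (bi, (si', fv u)) ∈ p.inc →
        TES p ⟨bi :: fa a :: tr.arrows.map fa, si', fv tr.tgt⟩ Si' := by
      intro i bi si' Si' hbi hSi' hsi'
      rw [List.getElem?_map, Option.map_eq_some_iff] at hbi hSi'
      obtain ⟨ai, hai, rfl⟩ := hbi
      obtain ⟨Si, hSi, rfl⟩ := hSi'
      have hai' : ai ∈ g.Arr := ((hars.2.1 ai).mp (List.mem_of_getElem? hai)).1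
      obtain ⟨si, hsi, rfl⟩ := hemb.exists_inc_of_inc_map hg hp hai' (Or.inr hu) hsi'
      have harr' : ∀ b ∈ ai :: a :: tr.arrows, b ∈ g.Arr := by
        simpa only [List.forall_mem_cons] using ⟨hai', hext.1, harr⟩
      exact ih i ai si Si hai hSi hsi (hg.src_mem_Tk_s13 hsi hu) harr'
    have hTES := TES.ext (tr.map fv fa) (fa a) (fv u) (ars.map fa)
      (Ss.map (List.map (Trail.map fv fa))) (hemb.extendableBy_map hext harr)
      (hinc _ _ _ hau) (hemb.inArrowSeq_map hg hp hu hars)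
      (by simp only [List.length_map, hlen]) hrec'
    simpa only [List.map_flatten, List.map_zipWith, List.zipWith_map, List.map_map,
      Function.comp_def, Trail.map, List.map_append, List.map_cons, List.map_nil] using hTES

lemma IsEmbedding.forall₂_le_of_tl (hemb : IsEmbedding le g p fv fa) (hp : IsGraph p)
    {xs : List V} {τs σs : List L} (hτs : List.Forall₂ (fun x τ => (x, τ) ∈ g.tl) xs τs)
    (hσs : List.Forall₂ (fun x σ => (x, σ) ∈ p.tl) (xs.map fv) σs) :
    List.Forall₂ (fun τ σ => (τ, σ) ∈ le) τs σs := by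
  induction hτs generalizing σs with
  | nil => cases hσs; exact .nil
  | cons hx _ ih =>
    cases hσs with
    | cons hσ hσs =>
      obtain ⟨-, -, -, -, -, -, htl⟩ := hemb.2.2.2.2.2
      obtain ⟨σ', hσ', hle⟩ := htl _ _ hx
      exact .cons (hp.2.2.2.2.1.eq_of_mem hσ' hσ ▸ hle) (ih hσs)

end

theorem embedding_preserves_cts_and_foundations_general {V A L : Type*}
    (Cs Ps : CSpace V A L)
    (g : PreGraph V A L) (t : V) (hg : IsConstruction Cs g t)
    (p : PreGraph V A L) (v : V) (hp : IsConstruction Ps p v)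
    (fv : V → V) (fa : A → A)
    (hemb : IsEmbedding Cs.le g p fv fa) (hft : fv t = v) :
    (∀ S : List (Trail V A), TES g (Trail.nil t) S →
        TES p (Trail.nil v) (S.map (Trail.map fv fa))) ∧
    (∀ S S' : List (Trail V A), TES g (Trail.nil t) S → TES p (Trail.nil v) S' →
        srcSeq S' = (srcSeq S).map fv) ∧
    (∀ (S S' : List (Trail V A)) (τs σs : List L),
        TES g (Trail.nil t) S → TES p (Trail.nil v) S' →
        List.Forall₂ (fun x τ => (x, τ) ∈ g.tl) (srcSeq S) τs →
        List.Forall₂ (fun x σ => (x, σ) ∈ p.tl) (srcSeq S') σs →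
        List.Forall₂ (fun τ σ => (τ, σ) ∈ Cs.le) τs σs) := by
  obtain ⟨-, ⟨hgG, -⟩, -, -, -, -, htg, -⟩ := hg
  obtain ⟨-, ⟨hpG, -⟩, -, -, -, hpU, hvp, -⟩ := hp
  have cts_map : ∀ S : List (Trail V A), TES g (Trail.nil t) S →
      TES p (Trail.nil v) (S.map (Trail.map fv fa)) := fun S hS => by
    simpa only [Trail.map, Trail.nil, List.map_nil, hft] using
      hemb.TES_map hgG hpG hS htg (by simp [Trail.nil])
  have srcSeq_eq : ∀ S S' : List (Trail V A), TES g (Trail.nil t) S →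
      TES p (Trail.nil v) S' → srcSeq S' = (srcSeq S).map fv := by
    intro S S' hS hS'
    rw [← (cts_map S hS).eq hpG hpU hS' hvp]
    simp only [srcSeq, List.map_map, Function.comp_def, Trail.map]
  refine ⟨cts_map, srcSeq_eq, fun S S' τs σs hS hS' hτs hσs => ?_⟩
  rw [srcSeq_eq S S' hS hS'] at hσs
  exact hemb.forall₂_le_of_tl hpG hτs hσs

/-- an embedding of a construction into a pattern maps its complete trail
sequence onto that of the pattern, maps its foundation token-sequence onto that of the
pattern, and the foundation type-sequence of the construction specialises that of the
pattern. -/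
theorem embedding_preserves_cts_and_foundations {V A L : Type*}
    (Cs Ps : CSpace V A L) (hCs : IsCSpace Cs) (hPs : IsPatternSpace Cs Ps)
    (g : PreGraph V A L) (t : V) (hg : IsConstruction Cs g t)
    (p : PreGraph V A L) (v : V) (hp : IsConstruction Ps p v)
    (fv : V → V) (fa : A → A)
    (hemb : IsEmbedding Cs.le g p fv fa) (hft : fv t = v) :
    (∀ S : List (Trail V A), TES g (Trail.nil t) S →
        TES p (Trail.nil v) (S.map (Trail.map fv fa))) ∧
    (∀ S S' : List (Trail V A), TES g (Trail.nil t) S → TES p (Trail.nil v) S' →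
        srcSeq S' = (srcSeq S).map fv) ∧
    (∀ (S S' : List (Trail V A)) (τs σs : List L),
        TES g (Trail.nil t) S → TES p (Trail.nil v) S' →
        List.Forall₂ (fun x τ => (x, τ) ∈ g.tl) (srcSeq S) τs →
        List.Forall₂ (fun x σ => (x, σ) ∈ p.tl) (srcSeq S') σs →
        List.Forall₂ (fun τ σ => (τ, σ) ∈ Cs.le) τs σs) :=
  embedding_preserves_cts_and_foundations_general Cs Ps g t hg p v hp fv fa hemb hft

end RST
end
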